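/- arXiv:2205.02798 — 13 statements merged into one kernel-verified Lean document; each statement's English description precedes it below -/
import Mathlib

section
/- Let P = (X, ≺) be a finite poset with |X| = n elements. Then e(P) · ∏_{x ∈ X} b(x) ≥ n! (the Björner–Wachs inequality). -/
/-!
Induction on `n`. If `m` is minimal, putting `m` first in a linear extension of `X \ {m}` gives a
linear extension of `X`, and different pairs give different extensions, so
`∑_{m minimal} e(X \ {m}) ≤ e(X)`; removing `m` does not change `b` on the other elements. Every
element lies above some minimal one, so `n ≤ ∑_{m minimal} b(m)`, and therefore
`n! ≤ ∑_m b(m) · (n-1)! ≤ ∑_m b(m) · e(X \ {m}) · ∏_{x ≠ m} b(x) = ∑_m e(X \ {m}) · ∏_x b(x)`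
`≤ e(X) · ∏_x b(x)`.
-/

/-- The number of linear extensions of a finite poset `X`: bijections
`f : X ≃ Fin (card X)` such that `x < y` implies `f x < f y`. -/
noncomputable def linExtCount (X : Type*) [Fintype X] [PartialOrder X] : ℕ :=
  Nat.card {f : X ≃ Fin (Fintype.card X) // ∀ ⦃a b : X⦄, a < b → f a < f b}

open Finset Nat

section extendByZero

variable {X : Type*} [DecidableEq X] {n : ℕ}

def Equiv.extendByZero (m : X) (g : {x // x ≠ m} ≃ Fin n) : X ≃ Fin (n + 1) :=
  (Equiv.optionSubtypeNe m).symm.trans ((Equiv.optionCongr g).trans (finSuccEquiv n).symm)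

@[simp] lemma Equiv.extendByZero_self (m : X) (g : {x // x ≠ m} ≃ Fin n) :
    extendByZero m g m = 0 := by
  simp [extendByZero]

lemma Equiv.extendByZero_of_ne {m x : X} (g : {x // x ≠ m} ≃ Fin n) (hx : x ≠ m) :
    extendByZero m g x = (g ⟨x, hx⟩).succ := by
  simp [extendByZero, Equiv.optionSubtypeNe_symm_of_ne hx]

lemma Equiv.extendByZero_injective (m : X) : Function.Injective (extendByZero (n := n) m) :=
  fun g g' h => Equiv.ext fun x => Fin.succ_injective _ <| by
    simpa only [extendByZero_of_ne _ x.2] using congr($h x.1)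

end extendByZero

section LinearExtension

variable {X : Type*} [PartialOrder X]

lemma linExtCount_eq_card [Fintype X] {n : ℕ} (h : Fintype.card X = n) :
    linExtCount X = Nat.card {f : X ≃ Fin n // StrictMono f} := by
  subst h; rfl

lemma strictMono_extendByZero [DecidableEq X] {n : ℕ} {m : X} (hm : IsMin m)
    {g : {x // x ≠ m} ≃ Fin n} (hg : StrictMono g) : StrictMono (Equiv.extendByZero m g) := by
  intro a b hab
  have hb : b ≠ m := fun h => hm.not_lt (h ▸ hab)
  rw [Equiv.extendByZero_of_ne g hb]
  by_cases ha : a = m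
  · subst ha; simp [Fin.succ_pos]
  · rw [Equiv.extendByZero_of_ne g ha, Fin.succ_lt_succ_iff]
    exact hg hab

open scoped Classical in
lemma sum_card_strictMono_equiv_compl_isMin_le [Fintype X] [DecidableEq X] (n : ℕ) :
    ∑ m : {m : X // IsMin m}, Nat.card {g : {x // x ≠ m.1} ≃ Fin n // StrictMono g} ≤
      Nat.card {f : X ≃ Fin (n + 1) // StrictMono f} := by
  rw [← Nat.card_sigma]
  refine Nat.card_le_card_of_injective
    (fun p => ⟨Equiv.extendByZero p.1.1 p.2.1, strictMono_extendByZero p.1.2 p.2.2⟩) ?_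
  rintro ⟨⟨m, hm⟩, g, hg⟩ ⟨⟨m', hm'⟩, g', hg'⟩ h
  have hf : Equiv.extendByZero m g = Equiv.extendByZero m' g' := congrArg Subtype.val h
  obtain rfl : m = m' := (Equiv.extendByZero m' g').injective <| by
    rw [Equiv.extendByZero_self, ← hf, Equiv.extendByZero_self]
  obtain rfl := Equiv.extendByZero_injective m hf
  rfl

open scoped Classical in
lemma card_le_sum_card_Ici_isMin [Fintype X] :
    Fintype.card X ≤ ∑ m : {m : X // IsMin m}, Nat.card {y : X // m.1 ≤ y} := by
  rw [← Nat.card_sigma, ← Nat.card_eq_fintype_card]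
  refine Nat.card_le_card_of_surjective (fun p => p.2.1) fun y => ?_
  obtain ⟨m, hmy, hm⟩ := exists_minimal_le_of_wellFoundedLT (fun _ : X => True) y trivial
  exact ⟨⟨⟨m, fun z hz => hm.2 trivial hz⟩, y, hmy⟩, rfl⟩

lemma card_Ici_compl_isMin {m : X} (hm : IsMin m) (x : {x // x ≠ m}) :
    Nat.card {y : {x // x ≠ m} // x ≤ y} = Nat.card {y : X // x.1 ≤ y} :=
  Nat.card_congr <| Equiv.subtypeSubtypeEquivSubtype fun {y} hxy hym =>
    x.2 (hm.eq_of_le (hym ▸ hxy))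

end LinearExtension

/-- **Björner–Wachs inequality**: `e(P) · ∏_{x ∈ X} b(x) ≥ n!`, where `b(x)` is
the size of the upper order ideal of `x`. -/
theorem bjorner_wachs (X : Type*) [Fintype X] [PartialOrder X] :
    Nat.factorial (Fintype.card X) ≤
      linExtCount X * ∏ x : X, Nat.card {y : X // x ≤ y} := by
  classical
  induction h : Fintype.card X generalizing X with
  | zero =>
    have : IsEmpty X := Fintype.card_eq_zero_iff.mp h
    have : Nonempty {f : X ≃ Fin 0 // StrictMono f} :=
      ⟨Equiv.equivOfIsEmpty X (Fin 0), fun a => isEmptyElim a⟩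
    simp [linExtCount_eq_card h, Nat.one_le_iff_ne_zero]
  | succ n ih =>
    set b : X → ℕ := fun x => Nat.card {y : X // x ≤ y}
    have hcard (m : X) : Fintype.card {x // x ≠ m} = n := by
      simp [Fintype.card_subtype_compl, h]
    have step (m : {m : X // IsMin m}) :
        b m * n ! ≤ linExtCount {x // x ≠ m.1} * ∏ x, b x := by
      have := ih {x // x ≠ m.1} (hcard m)
      simp_rw [card_Ici_compl_isMin m.2] at this
      rw [Fintype.prod_eq_mul_prod_subtype_ne b m.1, mul_left_comm]
      exact Nat.mul_le_mul_left _ this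
    calc (n + 1)! = (n + 1) * n ! := Nat.factorial_succ n
      _ ≤ (∑ m : {m : X // IsMin m}, b m.1) * n ! := by
        gcongr; rw [← h]; exact card_le_sum_card_Ici_isMin
      _ = ∑ m : {m : X // IsMin m}, b m.1 * n ! := sum_mul ..
      _ ≤ ∑ m : {m : X // IsMin m}, linExtCount {x // x ≠ m.1} * ∏ x, b x :=
        sum_le_sum fun m _ => step m
      _ = (∑ m : {m : X // IsMin m}, linExtCount {x // x ≠ m.1}) * ∏ x, b x :=
        (sum_mul ..).symm
      _ ≤ linExtCount X * ∏ x, b x := by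
        gcongr
        simp_rw [linExtCount_eq_card h, linExtCount_eq_card (hcard _)]
        exact sum_card_strictMono_equiv_compl_isMin_le n
end

section
/- Let P = (X, ≺) be a finite poset with |X| = n elements, let r be the number of maximal elements of P, and let t ≥ 1 be an integer. Then Ω(P,t) · ∏_{x ∈ X} b(x) ≥ t^r · (t+1)^{n−r}. -/
/-- The order polynomial `Ω(P,t)`: the number of order-preserving maps
`g : X → {1,…,t}`. -/
noncomputable def orderPoly (X : Type*) [Fintype X] [PartialOrder X] (t : ℕ) : ℕ :=
  Nat.card {g : X → Fin t // Monotone g}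

/-!
Induct on `|X|` by deleting a minimal element `u`. A monotone map on `X` is a monotone map `g`
on `X \ {u}` together with a value `g u` below `g` on the strict upper set `U` of `u`, and
`b(u) = |U| + 1`, while `b` and maximality are unchanged on `X \ {u}`. If `u` is maximal there
are `t` choices for `g u`. Otherwise it suffices that, for every nonempty upper set `S` of a poset
`Y`, a uniformly random monotone map `Y → [t]` has on average at least `(t + 1) / (|S| + 1)`
common lower bounds on `S`. For `S = Y` this follows by summing
`Ω(Y, s + 1) / Ω(Y, s) ≤ (s + 1) / (s + 1 - |Y|)` over `s < t`. Otherwise delete a minimal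
element of `Y` outside `S`: this reweights the uniform distribution on the smaller poset by an
increasing function, which by the FKG inequality can only increase the mean.
-/

open Finset
open scoped Classical

section Monotone

variable {Y : Type*} [Fintype Y] [PartialOrder Y] {t : ℕ}

noncomputable def monotoneMaps (Y : Type*) [Fintype Y] [PartialOrder Y] (t : ℕ) :
    Finset (Y → Fin t) :=
  {g | Monotone g}

@[simp]
lemma mem_monotoneMaps {g : Y → Fin t} : g ∈ monotoneMaps Y t ↔ Monotone g := by
  simp [monotoneMaps]

lemma orderPoly_eq_card_monotoneMaps : orderPoly Y t = #(monotoneMaps Y t) := by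
  rw [orderPoly, Nat.card_eq_fintype_card, Fintype.card_subtype, monotoneMaps]

lemma orderPoly_of_isEmpty [IsEmpty Y] : orderPoly Y t = 1 :=
  have : Nonempty {g : Y → Fin t // Monotone g} := ⟨⟨isEmptyElim, fun a => isEmptyElim a⟩⟩
  Nat.card_unique

lemma orderPoly_zero [Nonempty Y] : orderPoly Y 0 = 0 := by
  rw [orderPoly_eq_card_monotoneMaps, card_eq_zero, eq_empty_iff_forall_notMem]
  exact fun g => (g (Classical.arbitrary Y)).elim0

/-- Every map `Y → Fin (t + 1)` misses at least `t + 1 - |Y|` values `v`, and factoring it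
through `v.succAbove` gives a monotone map to `Fin t`. -/
theorem sub_card_mul_orderPoly_succ_le (t : ℕ) :
    (t + 1 - Fintype.card Y) * orderPoly Y (t + 1) ≤ (t + 1) * orderPoly Y t := by
  set P := {p ∈ monotoneMaps Y (t + 1) ×ˢ (univ : Finset (Fin (t + 1))) | ∀ y, p.1 y ≠ p.2}
  have h_lower : (t + 1 - Fintype.card Y) * orderPoly Y (t + 1) ≤ #P := by
    rw [orderPoly_eq_card_monotoneMaps, card_filter, sum_product, mul_comm, ← smul_eq_mul,
      ← sum_const]
    refine sum_le_sum fun g _ => ?_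
    rw [← card_filter]
    calc t + 1 - Fintype.card Y ≤ #(univ.image g)ᶜ := by
          rw [card_compl, Fintype.card_fin, ← card_univ (α := Y)]
          exact Nat.sub_le_sub_left card_image_le _
      _ ≤ _ := card_le_card fun v => by simp
  have h_upper : #P ≤ (t + 1) * orderPoly Y t := by
    have h_card : (t + 1) * #(monotoneMaps Y t) =
        #(monotoneMaps Y t ×ˢ (univ : Finset (Fin (t + 1)))) := by
      simp [mul_comm]
    rw [orderPoly_eq_card_monotoneMaps, h_card]
    refine card_le_card_of_surjOn (fun p => (fun y => p.2.succAbove (p.1 y), p.2)) ?_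
    rintro ⟨g, v⟩ hp
    simp only [P, coe_filter, mem_product, mem_monotoneMaps, mem_univ, and_true,
      Set.mem_ofPred_eq] at hp
    choose h hh using fun y => Fin.exists_succAbove_eq (hp.2 y)
    refine ⟨(h, v), ?_, by simp [hh]⟩
    simp only [coe_product, Set.mem_prod, mem_coe, mem_monotoneMaps, mem_univ, and_true]
    intro a b hab
    rw [← (Fin.strictMono_succAbove v).le_iff_le, hh, hh]
    exact hp.1 hab
  exact h_lower.trans h_upper

end Monotone

section LowerBounds

variable {Y : Type*} {t : ℕ}

noncomputable def lowerBoundCount (S : Finset Y) (g : Y → Fin t) : ℕ :=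
  #{v | ∀ y ∈ S, v ≤ g y}

@[simp]
lemma lowerBoundCount_empty (g : Y → Fin t) : lowerBoundCount ∅ g = t := by
  simp [lowerBoundCount]

lemma monotone_lowerBoundCount (S : Finset Y) :
    Monotone (lowerBoundCount (t := t) S) :=
  fun _ _ hgh => card_le_card fun v => by
    simpa using fun hv y hy => (hv y hy).trans (hgh y)

lemma lowerBoundCount_subtype {p : Y → Prop} [DecidablePred p] {S : Finset Y}
    (hS : ∀ y ∈ S, p y) (g : Y → Fin t) :
    lowerBoundCount (S.subtype p) (fun q => g q) = lowerBoundCount S g := by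
  unfold lowerBoundCount
  congr 1
  ext v
  simp only [mem_filter, mem_univ, true_and, mem_subtype, Subtype.forall]
  exact ⟨fun h y hy => h y (hS y hy) hy, fun h y _ hy => h y hy⟩

variable [Fintype Y] [PartialOrder Y]

lemma card_monotoneMaps_filter_le (v : Fin t) :
    #{g ∈ monotoneMaps Y t | ∀ y, v ≤ g y} = orderPoly Y (t - v) := by
  rw [orderPoly_eq_card_monotoneMaps]
  refine card_nbij' (fun g y => ⟨g y - v, by omega⟩) (fun h y => ⟨h y + v, by omega⟩)
    ?_ ?_ ?_ ?_
  · intro g hg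
    simp only [coe_filter, mem_monotoneMaps, Set.mem_ofPred_eq] at hg
    simp only [mem_coe, mem_monotoneMaps]
    intro a b hab
    have := hg.1 hab
    simp only [Fin.le_def] at this ⊢
    omega
  · intro h hh
    simp only [mem_coe, mem_monotoneMaps] at hh
    simp only [coe_filter, mem_monotoneMaps, Set.mem_ofPred_eq, Fin.le_def]
    refine ⟨fun a b hab => ?_, fun y => by omega⟩
    have := hh hab
    simp only [Fin.le_def] at this ⊢
    omega
  · intro g hg
    simp only [coe_filter, mem_monotoneMaps, Set.mem_ofPred_eq, Fin.le_def] at hg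
    funext y
    have := hg.2 y
    ext
    simp only
    omega
  · intro h _
    funext y
    ext
    simp

theorem sum_lowerBoundCount_univ (t : ℕ) :
    ∑ g ∈ monotoneMaps Y t, lowerBoundCount univ g =
      ∑ s ∈ range t, orderPoly Y (s + 1) := by
  calc ∑ g ∈ monotoneMaps Y t, lowerBoundCount univ g
      = ∑ v : Fin t, #{g ∈ monotoneMaps Y t | ∀ y, v ≤ g y} := by
        simp only [lowerBoundCount, mem_univ, forall_const, card_filter]
        exact sum_comm
    _ = ∑ i ∈ range t, orderPoly Y (t - i) := by
        simp only [card_monotoneMaps_filter_le]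
        exact Fin.sum_univ_eq_sum_range (fun i => orderPoly Y (t - i)) t
    _ = ∑ s ∈ range t, orderPoly Y (s + 1) := by
        rw [← sum_range_reflect]
        refine sum_congr rfl fun i hi => ?_
        rw [mem_range] at hi
        congr 1
        omega

theorem succ_mul_orderPoly_le_sum [Nonempty Y] (t : ℕ) :
    (t + 1) * orderPoly Y t ≤ (Fintype.card Y + 1) * ∑ s ∈ range t, orderPoly Y (s + 1) := by
  induction t with
  | zero => simp [orderPoly_zero]
  | succ t ih =>
    have h_split : t + 1 + 1 ≤ (t + 1 - Fintype.card Y) + (Fintype.card Y + 1) := by omega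
    calc (t + 1 + 1) * orderPoly Y (t + 1)
        ≤ (t + 1 - Fintype.card Y) * orderPoly Y (t + 1)
          + (Fintype.card Y + 1) * orderPoly Y (t + 1) := by
          rw [← add_mul]; exact Nat.mul_le_mul_right _ h_split
      _ ≤ (t + 1) * orderPoly Y t + (Fintype.card Y + 1) * orderPoly Y (t + 1) :=
          Nat.add_le_add_right (sub_card_mul_orderPoly_succ_le t) _
      _ ≤ (Fintype.card Y + 1) * ∑ s ∈ range (t + 1), orderPoly Y (s + 1) := by
          rw [sum_range_succ, mul_add]; gcongr

end LowerBounds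

theorem sum_mul_sum_le_card_mul_sum_of_sublattice {α β : Type*} [DistribLattice α] [Fintype α]
    [CommSemiring β] [LinearOrder β] [IsStrictOrderedRing β] [ExistsAddOfLE β]
    {s : Finset α} (hs : ∀ a ∈ s, ∀ b ∈ s, a ⊓ b ∈ s ∧ a ⊔ b ∈ s)
    {f g : α → β}
    (hf₀ : 0 ≤ f) (hg₀ : 0 ≤ g) (hf : Monotone f) (hg : Monotone g) :
    (∑ a ∈ s, f a) * ∑ a ∈ s, g a ≤ #s * ∑ a ∈ s, f a * g a := by
  have h := fkg f g (fun a => if a ∈ s then (1 : β) else 0) (fun a => by positivity) hf₀ hg₀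
    hf hg fun a b => by
      by_cases ha : a ∈ s
      · by_cases hb : b ∈ s
        · simp [ha, hb, hs a ha b hb]
        · simp only [hb, if_false, mul_zero]; positivity
      · simp only [ha, if_false, zero_mul]; positivity
  simpa [ite_mul, sum_ite_mem] using h

section RemoveMin

variable {Y : Type*} [Fintype Y] [PartialOrder Y] {t : ℕ}

theorem sum_mul_sum_monotoneMaps_le {f g : (Y → Fin t) → ℕ} (hf : Monotone f)
    (hg : Monotone g) :
    (∑ a ∈ monotoneMaps Y t, f a) * ∑ a ∈ monotoneMaps Y t, g a ≤
      orderPoly Y t * ∑ a ∈ monotoneMaps Y t, f a * g a := by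
  rw [orderPoly_eq_card_monotoneMaps]
  refine sum_mul_sum_le_card_mul_sum_of_sublattice (fun a ha b hb => ?_) (fun _ => Nat.zero_le _)
    (fun _ => Nat.zero_le _) hf hg
  simp only [mem_monotoneMaps] at ha hb ⊢
  exact ⟨ha.inf hb, ha.sup hb⟩

noncomputable def strictUpper (u : Y) : Finset {y : Y // y ≠ u} :=
  {q | u < q}

variable {u : Y}

lemma monotone_funSplitAt_symm_iff (hu : IsMin u) {v : Fin t} {g : {y : Y // y ≠ u} → Fin t} :
    Monotone ((Equiv.funSplitAt u (Fin t)).symm (v, g)) ↔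
      Monotone g ∧ ∀ q ∈ strictUpper u, v ≤ g q := by
  simp only [strictUpper, mem_filter, mem_univ, true_and]
  constructor
  · intro h
    refine ⟨fun a b hab => ?_, fun q hq => ?_⟩
    · simpa [a.2, b.2] using h (show (a : Y) ≤ b from hab)
    · simpa [q.2] using h hq.le
  · rintro ⟨hg, hv⟩ a b hab
    by_cases ha : a = u
    · subst ha
      by_cases hb : b = a
      · simp [hb]
      · simpa [hb] using hv ⟨b, hb⟩ (lt_of_le_of_ne hab (Ne.symm hb))
    · have hb : b ≠ u := fun hb => ha (hu.eq_of_le (hb ▸ hab))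
      simpa [ha, hb] using hg (show (⟨a, ha⟩ : {y // y ≠ u}) ≤ ⟨b, hb⟩ from hab)

theorem sum_monotoneMaps_restrict (hu : IsMin u) (F : ({y : Y // y ≠ u} → Fin t) → ℕ) :
    ∑ g ∈ monotoneMaps Y t, F (fun q => g q) =
      ∑ g ∈ monotoneMaps {y // y ≠ u} t, lowerBoundCount (strictUpper u) g * F g := by
  simp only [monotoneMaps, sum_filter, lowerBoundCount, card_filter, sum_mul, ite_mul, one_mul,
    zero_mul]
  have h_restrict (v : Fin t) (g : {y : Y // y ≠ u} → Fin t) :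
      (fun q : {y // y ≠ u} => (Equiv.funSplitAt u (Fin t)).symm (v, g) q) = g :=
    funext fun q => by simp [q.2]
  rw [← (Equiv.funSplitAt u (Fin t)).symm.sum_comp, Fintype.sum_prod_type, sum_comm]
  simp only [h_restrict]
  refine sum_congr (by congr!) fun g _ => ?_
  by_cases hg : Monotone g <;> simp [monotone_funSplitAt_symm_iff hu, hg]

theorem orderPoly_eq_sum_lowerBoundCount (hu : IsMin u) (t : ℕ) :
    orderPoly Y t = ∑ g ∈ monotoneMaps {y // y ≠ u} t, lowerBoundCount (strictUpper u) g := by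
  simpa [orderPoly_eq_card_monotoneMaps] using
    sum_monotoneMaps_restrict hu (t := t) fun _ => (1 : ℕ)

end RemoveMin

section UpperSet

variable {Y : Type*} [PartialOrder Y] {p : Y → Prop}

lemma isUpperSet_ne_of_isMin {u : Y} (hu : IsMin u) : IsUpperSet {y | y ≠ u} :=
  fun _ _ hab ha hb => ha (hu.eq_of_le (hb ▸ hab))

lemma IsUpperSet.isMax_subtype_iff (hp : IsUpperSet {y | p y}) (q : {y // p y}) :
    IsMax q ↔ IsMax (q : Y) :=
  ⟨fun h b hb => h (b := ⟨b, hp hb q.2⟩) hb, fun h _ hb => h hb⟩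

lemma IsUpperSet.card_subtype_le (hp : IsUpperSet {y | p y}) (q : {y // p y}) :
    Nat.card {y : {y // p y} // q ≤ y} = Nat.card {y : Y // (q : Y) ≤ y} :=
  Nat.card_congr (Equiv.subtypeSubtypeEquivSubtype fun hy => hp hy q.2)

end UpperSet

section Induction

variable {Y : Type*} [Fintype Y] [PartialOrder Y]

theorem succ_mul_orderPoly_le_sum_lowerBoundCount (S : Finset Y) (hS : IsUpperSet (S : Set Y))
    (hS_ne : S.Nonempty) (t : ℕ) :
    (t + 1) * orderPoly Y t ≤ (#S + 1) * ∑ g ∈ monotoneMaps Y t, lowerBoundCount S g := by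
  obtain ⟨n, hn⟩ : ∃ n, Fintype.card Y = n := ⟨_, rfl⟩
  induction n generalizing Y with
  | zero =>
    have : IsEmpty Y := Fintype.card_eq_zero_iff.1 hn
    exact (hS_ne.ne_empty (eq_empty_of_isEmpty S)).elim
  | succ n ih =>
    by_cases hS_univ : S = univ
    · subst hS_univ
      have : Nonempty Y := hS_ne.to_type
      rw [card_univ, sum_lowerBoundCount_univ]
      exact succ_mul_orderPoly_le_sum t
    obtain ⟨u, hu⟩ := exists_minimal_of_wellFoundedLT (· ∉ S)
      (by simpa [eq_univ_iff_forall] using hS_univ)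
    have huS : u ∉ S := hu.prop
    have hu_min : IsMin u := fun z hz => hu.2 (fun hzS => huS (hS hz hzS)) hz
    have hS_ne_u : ∀ y ∈ S, y ≠ u := fun y hy (h : y = u) => huS (h ▸ hy)
    set S' := S.subtype (· ≠ u)
    have hS'_card : #S' = #S := by
      rw [card_subtype, filter_true_of_mem hS_ne_u]
    have hS' : IsUpperSet (S' : Set {y // y ≠ u}) := fun a b hab ha => by
      simp only [S', mem_coe, mem_subtype] at ha ⊢
      exact hS hab ha
    have hS'_ne : S'.Nonempty := by
      obtain ⟨y, hy⟩ := hS_ne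
      exact ⟨⟨y, hS_ne_u y hy⟩, by simpa [S'] using hy⟩
    have h_ih := ih S' hS' hS'_ne
      (by rw [Fintype.card_subtype_compl, Fintype.card_subtype_eq, hn]; rfl)
    have h_sum : ∑ g ∈ monotoneMaps Y t, lowerBoundCount S g =
        ∑ g ∈ monotoneMaps {y // y ≠ u} t,
          lowerBoundCount (strictUpper u) g * lowerBoundCount S' g := by
      rw [← sum_monotoneMaps_restrict hu_min]
      exact sum_congr rfl fun g _ => (lowerBoundCount_subtype hS_ne_u g).symm
    have h_fkg := sum_mul_sum_monotoneMaps_le (t := t)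
      (monotone_lowerBoundCount (strictUpper u)) (monotone_lowerBoundCount S')
    rw [hS'_card] at h_ih
    rw [orderPoly_eq_sum_lowerBoundCount hu_min, h_sum]
    set W := orderPoly {y // y ≠ u} t with hW_def
    set A := ∑ g ∈ monotoneMaps {y // y ≠ u} t, lowerBoundCount S' g
    set B := ∑ g ∈ monotoneMaps {y // y ≠ u} t, lowerBoundCount (strictUpper u) g
    set C := ∑ g ∈ monotoneMaps {y // y ≠ u} t,
      lowerBoundCount (strictUpper u) g * lowerBoundCount S' g
    rcases Nat.eq_zero_or_pos W with hW | hW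
    · rw [hW_def, orderPoly_eq_card_monotoneMaps, card_eq_zero] at hW
      simp [B, hW]
    refine Nat.le_of_mul_le_mul_left ?_ hW
    calc W * ((t + 1) * B) = (t + 1) * W * B := by ring
      _ ≤ (#S + 1) * A * B := by gcongr
      _ = (#S + 1) * (B * A) := by ring
      _ ≤ (#S + 1) * (W * C) := by gcongr
      _ = W * ((#S + 1) * C) := by ring

theorem ite_isMax_mul_orderPoly_le {u : Y} (hu : IsMin u) (t : ℕ) :
    (if IsMax u then t else t + 1) * orderPoly {y // y ≠ u} t ≤
      Nat.card {y // u ≤ y} * orderPoly Y t := by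
  have h_card : Nat.card {y // u ≤ y} = #(strictUpper u) + 1 := by
    rw [Nat.card_eq_fintype_card, Fintype.card_subtype, card_filter, strictUpper, card_filter,
      Fintype.sum_eq_add_sum_subtype_ne _ u, add_comm]
    congr 1
    · exact sum_congr rfl fun q _ => by simp [le_iff_lt_or_eq, Ne.symm q.2]
    · simp
  rw [orderPoly_eq_sum_lowerBoundCount hu, h_card]
  split_ifs with h_max
  · have : strictUpper u = ∅ := eq_empty_of_forall_notMem fun q hq =>
      (mem_filter.1 hq).2.not_isMax h_max
    simp [this, orderPoly_eq_card_monotoneMaps, mul_comm]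
  · obtain ⟨y, hy⟩ := not_isMax_iff.1 h_max
    refine succ_mul_orderPoly_le_sum_lowerBoundCount _ (fun a b hab ha => ?_)
      ⟨⟨y, hy.ne'⟩, by simpa [strictUpper] using hy⟩ t
    simp only [strictUpper, coe_filter, mem_univ, true_and, Set.mem_ofPred_eq] at ha ⊢
    exact ha.trans_le hab

theorem prod_ite_isMax_le_orderPoly_mul_prod (t : ℕ) :
    ∏ x : Y, (if IsMax x then t else t + 1) ≤
      orderPoly Y t * ∏ x : Y, Nat.card {y // x ≤ y} := by
  obtain ⟨n, hn⟩ : ∃ n, Fintype.card Y = n := ⟨_, rfl⟩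
  induction n generalizing Y with
  | zero =>
    have : IsEmpty Y := Fintype.card_eq_zero_iff.1 hn
    simp [orderPoly_of_isEmpty]
  | succ n ih =>
    have : Nonempty Y := Fintype.card_pos_iff.1 (by omega)
    obtain ⟨u, hu⟩ := exists_minimal_of_wellFoundedLT (fun _ : Y => True)
      ⟨Classical.arbitrary Y, trivial⟩
    have hu_min : IsMin u := minimal_true.1 hu
    have hQ := isUpperSet_ne_of_isMin hu_min
    have h_ih := ih (Y := {y // y ≠ u})
      (by rw [Fintype.card_subtype_compl, Fintype.card_subtype_eq, hn]; rfl)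
    set c := if IsMax u then t else t + 1
    set B := ∏ q : {y // y ≠ u}, Nat.card {y // q ≤ y}
    calc ∏ x : Y, (if IsMax x then t else t + 1)
        = c * ∏ q : {y // y ≠ u}, (if IsMax q then t else t + 1) := by
          simp only [c, Fintype.prod_eq_mul_prod_subtype_ne _ u, hQ.isMax_subtype_iff]
      _ ≤ c * (orderPoly {y // y ≠ u} t * B) := by gcongr
      _ = c * orderPoly {y // y ≠ u} t * B := by ring
      _ ≤ Nat.card {y // u ≤ y} * orderPoly Y t * B :=
          Nat.mul_le_mul_right _ (ite_isMax_mul_orderPoly_le hu_min t)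
      _ = orderPoly Y t * ∏ x : Y, Nat.card {y // x ≤ y} := by
          simp only [B, Fintype.prod_eq_mul_prod_subtype_ne _ u, hQ.card_subtype_le]; ring

end Induction

theorem orderPoly_lower_bound_general (X : Type*) [Fintype X] [PartialOrder X] (t : ℕ) :
    t ^ (Nat.card {x : X // IsMax x}) *
        (t + 1) ^ (Fintype.card X - Nat.card {x : X // IsMax x}) ≤
      orderPoly X t * ∏ x : X, Nat.card {y : X // x ≤ y} := by
  have h_prod : ∏ x : X, (if IsMax x then t else t + 1) =
      t ^ (Nat.card {x : X // IsMax x}) *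
        (t + 1) ^ (Fintype.card X - Nat.card {x : X // IsMax x}) := by
    rw [prod_ite, prod_const, prod_const, Nat.card_eq_fintype_card, ← Fintype.card_subtype_compl,
      Fintype.card_subtype, Fintype.card_subtype]
  exact h_prod ▸ prod_ite_isMax_le_orderPoly_mul_prod t

/-- `Ω(P,t) · ∏_{x ∈ X} b(x) ≥ t^r · (t+1)^{n-r}`, where `r` is the number of
maximal elements of `P` and `b(x)` the size of the upper order ideal of `x`. -/
theorem orderPoly_lower_bound (X : Type*) [Fintype X] [PartialOrder X]
    (t : ℕ) (ht : 1 ≤ t) :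
    t ^ (Nat.card {x : X // IsMax x}) *
        (t + 1) ^ (Fintype.card X - Nat.card {x : X // IsMax x}) ≤
      orderPoly X t * ∏ x : X, Nat.card {y : X // x ≤ y} :=
  orderPoly_lower_bound_general X t
end

section
/- Let P = (X, ≺) be a finite poset. Then for every integer t ≥ 2, Ω(P,t)^2 ≥ Ω(P,t+1) · Ω(P,t−1). -/
open Finset FinsetFamily

section MonotoneIcoMaps

variable {X : Type*} [Fintype X] [PartialOrder X]

variable (X) in
open scoped Classical in
noncomputable def monotoneIcoMaps (a b : ℕ) : Finset (X → ℕ) :=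
  {f ∈ Fintype.piFinset fun _ => Ico a b | Monotone f}

lemma mem_monotoneIcoMaps {a b : ℕ} {f : X → ℕ} :
    f ∈ monotoneIcoMaps X a b ↔ Monotone f ∧ ∀ x, a ≤ f x ∧ f x < b := by
  simp [monotoneIcoMaps, and_comm]

lemma card_monotoneIcoMaps {a b : ℕ} (hab : a ≤ b) :
    #(monotoneIcoMaps X a b) = orderPoly X (b - a) := by
  classical
  obtain ⟨s, rfl⟩ := Nat.exists_eq_add_of_le hab
  rw [Nat.add_sub_cancel_left, orderPoly, Nat.card_eq_fintype_card, Fintype.card_subtype]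
  symm
  refine card_bij (fun g _ x => (g x : ℕ) + a) (fun g hg => ?_) (fun g _ h _ hgh => ?_)
    (fun f hf => ?_)
  · refine mem_monotoneIcoMaps.2 ⟨fun x y hxy => ?_, fun x => ?_⟩
    · simpa using (mem_filter.1 hg).2 hxy
    · have := (g x).isLt
      omega
  · funext x
    exact Fin.ext (by simpa using congrFun hgh x)
  · obtain ⟨hmono, hrange⟩ := mem_monotoneIcoMaps.1 hf
    refine ⟨fun x => ⟨f x - a, by have := hrange x; omega⟩,
      mem_filter.2 ⟨mem_univ _, fun x y hxy => ?_⟩, ?_⟩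
    · simpa [Fin.le_def] using Nat.sub_le_sub_right (hmono hxy) a
    · funext x
      have := hrange x
      simp only
      omega

lemma sups_monotoneIcoMaps_subset (a b a' b' : ℕ) :
    monotoneIcoMaps X a b ⊻ monotoneIcoMaps X a' b' ⊆ monotoneIcoMaps X (max a a') (max b b') := by
  refine sups_subset_iff.2 fun f hf g hg => ?_
  obtain ⟨hf, hfr⟩ := mem_monotoneIcoMaps.1 hf
  obtain ⟨hg, hgr⟩ := mem_monotoneIcoMaps.1 hg
  refine mem_monotoneIcoMaps.2 ⟨hf.sup hg, fun x => ?_⟩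
  have := hfr x
  have := hgr x
  simp only [Pi.sup_apply]
  omega

lemma infs_monotoneIcoMaps_subset (a b a' b' : ℕ) :
    monotoneIcoMaps X a b ⊼ monotoneIcoMaps X a' b' ⊆ monotoneIcoMaps X (min a a') (min b b') := by
  refine infs_subset_iff.2 fun f hf g hg => ?_
  obtain ⟨hf, hfr⟩ := mem_monotoneIcoMaps.1 hf
  obtain ⟨hg, hgr⟩ := mem_monotoneIcoMaps.1 hg
  refine mem_monotoneIcoMaps.2 ⟨hf.inf hg, fun x => ?_⟩
  have := hfr x
  have := hgr x
  simp only [Pi.inf_apply]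
  omega

end MonotoneIcoMaps

theorem orderPoly_add_add_mul_le (X : Type*) [Fintype X] [PartialOrder X] (n d k : ℕ) :
    orderPoly X (n + d + k) * orderPoly X n ≤ orderPoly X (n + d) * orderPoly X (n + k) := by
  set A := monotoneIcoMaps X 0 (n + d + k)
  set B := monotoneIcoMaps X d (n + d)
  have hinf : A ⊼ B ⊆ monotoneIcoMaps X 0 (n + d) := by
    convert infs_monotoneIcoMaps_subset 0 (n + d + k) d (n + d) using 2 <;> omega
  have hsup : A ⊻ B ⊆ monotoneIcoMaps X d (n + d + k) := by
    convert sups_monotoneIcoMaps_subset 0 (n + d + k) d (n + d) using 2 <;> omega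
  calc orderPoly X (n + d + k) * orderPoly X n = #A * #B := by
        rw [card_monotoneIcoMaps (by omega), card_monotoneIcoMaps (by omega)]
        simp
    _ ≤ #(A ⊼ B) * #(A ⊻ B) := le_card_infs_mul_card_sups A B
    _ ≤ #(monotoneIcoMaps X 0 (n + d)) * #(monotoneIcoMaps X d (n + d + k)) := by
        gcongr
    _ = orderPoly X (n + d) * orderPoly X (n + k) := by
        rw [card_monotoneIcoMaps (by omega), card_monotoneIcoMaps (by omega)]
        congr 2
        omega

/-- Log-concavity of the order polynomial:
`Ω(P,t)^2 ≥ Ω(P,t+1) · Ω(P,t−1)` for every integer `t ≥ 2`. -/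
theorem orderPoly_log_concave (X : Type*) [Fintype X] [PartialOrder X]
    (t : ℕ) (ht : 2 ≤ t) :
    orderPoly X (t + 1) * orderPoly X (t - 1) ≤ orderPoly X t ^ 2 := by
  obtain ⟨n, rfl⟩ : ∃ n, t = n + 1 := ⟨t - 1, by omega⟩
  simpa [sq] using orderPoly_add_add_mul_le X n 1 1
end

section
/- Let P = (X, ≺) be a finite poset with |X| = n elements. Then for every integer t ≥ 1, n! · Ω(P,t) ≥ e(P) · t^n. -/
/-!
For a word `s : Fin n → α` let `τ = Tuple.sort s`, so that `s ∘ τ` is monotone. A linear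
extension `f` and a word `s` give the monotone map `(s ∘ τ) ∘ f` and the bijection `τ ∘ f`, and this
pair determines `(f, s)`: `s` is the monotone map composed with the inverse of the bijection, and
then `f = τ⁻¹ ∘ (τ ∘ f)`. Counting both sides gives `e(P) · t^n ≤ Ω(P,t) · n!`.
-/

section

variable {X α : Type*} [PartialOrder X] [LinearOrder α] {n : ℕ}

def sortLinExt (p : {f : X ≃ Fin n // StrictMono f} × (Fin n → α)) :
    {g : X → α // Monotone g} × (X ≃ Fin n) :=
  (⟨p.2 ∘ p.1.1.trans (Tuple.sort p.2), (Tuple.monotone_sort p.2).comp p.1.2.monotone⟩,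
    p.1.1.trans (Tuple.sort p.2))

theorem sortLinExt_injective :
    Function.Injective (sortLinExt : {f : X ≃ Fin n // StrictMono f} × (Fin n → α) → _) := by
  rintro ⟨⟨f, _⟩, s⟩ ⟨⟨f', _⟩, s'⟩ h
  obtain ⟨hg, hσ⟩ := Prod.ext_iff.1 h
  change f.trans (Tuple.sort s) = f'.trans (Tuple.sort s') at hσ
  replace hg : s ∘ f.trans (Tuple.sort s) = s' ∘ f'.trans (Tuple.sort s') := congrArg Subtype.val hg
  rw [← hσ] at hg
  obtain rfl : s = s' := (f.trans (Tuple.sort s)).surjective.injective_comp_right hg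
  exact Prod.ext (Subtype.ext (Equiv.ext fun x => (Tuple.sort s).injective (Equiv.congr_fun hσ x)))
    rfl

theorem card_strictMono_equiv_mul_pow_le [Finite X] [Finite α] :
    Nat.card {f : X ≃ Fin n // StrictMono f} * Nat.card α ^ n ≤
      Nat.card {g : X → α // Monotone g} * Nat.card (X ≃ Fin n) := by
  have := Nat.card_le_card_of_injective _ (sortLinExt_injective (X := X) (α := α) (n := n))
  simpa only [Nat.card_prod, Nat.card_fun, Nat.card_fin] using this

end

theorem orderPoly_ge_linExt_general (X : Type*) [Fintype X] [PartialOrder X]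
    (t : ℕ) :
    linExtCount X * t ^ (Fintype.card X) ≤
      Nat.factorial (Fintype.card X) * orderPoly X t := by
  classical
  have key := card_strictMono_equiv_mul_pow_le (X := X) (α := Fin t) (n := Fintype.card X)
  rw [Nat.card_fin, Nat.card_eq_fintype_card (α := X ≃ _),
    Fintype.card_equiv (Fintype.equivFin X)] at key
  rw [linExtCount, orderPoly, mul_comm (Nat.factorial _)]
  exact key

/-- `n! · Ω(P,t) ≥ e(P) · t^n` for every integer `t ≥ 1`. -/
theorem orderPoly_ge_linExt (X : Type*) [Fintype X] [PartialOrder X]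
    (t : ℕ) (ht : 1 ≤ t) :
    linExtCount X * t ^ (Fintype.card X) ≤
      Nat.factorial (Fintype.card X) * orderPoly X t :=
  orderPoly_ge_linExt_general X t
end

section
/- Let P = (X, ≺) be a finite poset with |X| = n elements. Then n! · Ω(P,t) = e(P) · t^n for some integer t ≥ 1 if and only if P is an antichain on n elements (i.e. no two distinct elements of X are comparable). -/
/-!
Given a linear extension `f` of `P` and a word `v : Fin n → Fin t`, let `σ` sort `v`. The pair
`(f, v)` goes to the monotone map `g = (v ∘ σ) ∘ f` together with the bijection `ρ = σ ∘ f`;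
since `g ∘ ρ⁻¹ = v`, the image determines `v`, hence `σ`, hence `f`. So
`e(P) · t^n ≤ n! · Ω(P,t)`. If `a < b`, a constant map paired with a bijection that is not a
linear extension is missed (a constant word needs no sorting), so the inequality is strict. For an
antichain every map is monotone and every bijection is a linear extension.
-/

theorem linExtCount_eq_card_strictMono (X : Type*) [Fintype X] [PartialOrder X] :
    linExtCount X = Nat.card {f : X ≃ Fin (Fintype.card X) // StrictMono f} :=
  rfl

theorem card_equiv_fin_card (X : Type*) [Fintype X] :
    Nat.card (X ≃ Fin (Fintype.card X)) = (Fintype.card X).factorial := by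
  classical
  rw [Nat.card_eq_fintype_card, Fintype.card_equiv (Fintype.equivFin X)]

section SortAlong

variable {X : Type*} [PartialOrder X] {n t : ℕ}

def sortAlong (p : {f : X ≃ Fin n // StrictMono f} × (Fin n → Fin t)) :
    {g : X → Fin t // Monotone g} × (X ≃ Fin n) :=
  (⟨p.2 ∘ Tuple.sort p.2 ∘ p.1.1, (Tuple.monotone_sort p.2).comp p.1.2.monotone⟩,
    p.1.1.trans (Tuple.sort p.2))

theorem sortAlong_comp_symm (p : {f : X ≃ Fin n // StrictMono f} × (Fin n → Fin t)) :
    (sortAlong p).1.1 ∘ (sortAlong p).2.symm = p.2 := by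
  ext j
  simp [sortAlong]

theorem sortAlong_injective :
    Function.Injective (sortAlong : {f : X ≃ Fin n // StrictMono f} × (Fin n → Fin t) → _) := by
  rintro ⟨⟨f, hf⟩, v⟩ ⟨⟨f', hf'⟩, v'⟩ h
  have hv : v = v' := by
    have := sortAlong_comp_symm (⟨f, hf⟩, v)
    rwa [h, sortAlong_comp_symm, eq_comm] at this
  subst hv
  have hρ : f.trans (Tuple.sort v) = f'.trans (Tuple.sort v) := congrArg Prod.snd h
  simpa [Equiv.trans_assoc] using (Equiv.trans_cancel_right _ _ _).mp hρ

theorem const_notMem_range_sortAlong (c : Fin t) {ρ : X ≃ Fin n} (hρ : ¬ StrictMono ρ) :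
    (⟨fun _ => c, monotone_const⟩, ρ) ∉ Set.range (sortAlong (X := X)) := by
  rintro ⟨⟨⟨f, hf⟩, v⟩, h⟩
  have hv : v = fun _ => c := by
    have := sortAlong_comp_symm (⟨f, hf⟩, v)
    rw [h] at this
    exact this.symm
  have hsort : Tuple.sort v = Equiv.refl _ :=
    Tuple.sort_eq_refl_iff_monotone.mpr (hv ▸ monotone_const)
  have hρ' : f.trans (Tuple.sort v) = ρ := congrArg Prod.snd h
  rw [hsort, Equiv.trans_refl] at hρ'
  exact hρ (hρ' ▸ hf)

end SortAlong

theorem exists_equiv_not_strictMono {X : Type*} [Preorder X] {n : ℕ} {a b : X} (hab : a < b)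
    (e : X ≃ Fin n) : ∃ ρ : X ≃ Fin n, ¬ StrictMono ρ := by
  by_contra! h
  have hlt : e a < e b := h e hab
  have hgt : e b < e a := by simpa using h (e.trans (Equiv.swap (e a) (e b))) hab
  exact hlt.asymm hgt

theorem linExtCount_mul_pow_lt_factorial_mul_orderPoly {X : Type*} [Fintype X] [PartialOrder X]
    {a b : X} (hab : a < b) {t : ℕ} (ht : 1 ≤ t) :
    linExtCount X * t ^ Fintype.card X < (Fintype.card X).factorial * orderPoly X t := by
  classical
  obtain ⟨ρ, hρ⟩ := exists_equiv_not_strictMono hab (Fintype.equivFin X)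
  have hlt := Fintype.card_lt_of_injective_of_notMem _ sortAlong_injective
    (const_notMem_range_sortAlong ⟨0, ht⟩ hρ)
  rw [Fintype.card_prod, Fintype.card_prod, Fintype.card_fun, Fintype.card_fin, Fintype.card_fin,
    Fintype.card_equiv (Fintype.equivFin X)] at hlt
  simpa only [linExtCount_eq_card_strictMono, orderPoly, Nat.card_eq_fintype_card,
    mul_comm (Nat.factorial _)] using hlt

theorem orderPoly_eq_pow_of_antichain {X : Type*} [Fintype X] [PartialOrder X]
    (h : ∀ x y : X, x ≤ y → x = y) (t : ℕ) : orderPoly X t = t ^ Fintype.card X := by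
  have hmono (g : X → Fin t) : Monotone g := fun x y hxy => h x y hxy ▸ le_rfl
  rw [orderPoly, Nat.card_congr (Equiv.subtypeUnivEquiv hmono), Nat.card_fun,
    Nat.card_fin, Nat.card_eq_fintype_card]

theorem linExtCount_eq_factorial_of_antichain {X : Type*} [Fintype X] [PartialOrder X]
    (h : ∀ x y : X, x ≤ y → x = y) : linExtCount X = (Fintype.card X).factorial := by
  have hmono (f : X ≃ Fin (Fintype.card X)) : StrictMono f := fun x y hxy =>
    absurd (h x y hxy.le) hxy.ne
  rw [linExtCount_eq_card_strictMono, Nat.card_congr (Equiv.subtypeUnivEquiv hmono),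
    card_equiv_fin_card]

/-- `n! · Ω(P,t) = e(P) · t^n` for some integer `t ≥ 1` if and only if `P` is an
antichain (no two distinct elements are comparable). -/
theorem orderPoly_eq_iff_antichain (X : Type*) [Fintype X] [PartialOrder X] :
    (∃ t : ℕ, 1 ≤ t ∧
        Nat.factorial (Fintype.card X) * orderPoly X t =
          linExtCount X * t ^ (Fintype.card X)) ↔
      ∀ x y : X, x ≤ y → x = y := by
  constructor
  · rintro ⟨t, ht, heq⟩ a b hab
    by_contra hne
    exact (linExtCount_mul_pow_lt_factorial_mul_orderPoly (lt_of_le_of_ne hab hne) ht).ne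
      heq.symm
  · intro h
    refine ⟨1, le_rfl, ?_⟩
    rw [orderPoly_eq_pow_of_antichain h, linExtCount_eq_factorial_of_antichain h, one_pow]
end

section
/- Let P = (X, ≺) be a finite poset with |X| = n elements. Fix a chain u_1 ≺ u_2 ≺ … ≺ u_k in X and integers 1 ≤ a_1 < a_2 < … < a_k ≤ n. Then there exists a linear extension f of P with f(u_i) = a_i for all 1 ≤ i ≤ k if and only if the following conditions hold: ℓ(u_i) ≤ a_i and b(u_i) ≤ n − a_i + 1 for all 1 ≤ i ≤ k, and a_j − a_i > h(u_i, u_j) for all 1 ≤ i < j ≤ k. -/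
/-!
Necessity: a linear extension `f` maps `{y ≤ u i}`, `{y ≥ u i}` and `(u i, u j)` injectively
into `[1, a i]`, `[a i, n]` and `(a i, a j)`.

Sufficiency, by induction on `n`: remove a minimal element `x`, give it position `1` and shift
every `a i` down by one. If `a 0 = 1` then `ℓ(u 0) = 1`, so `x = u 0` is minimal and leaves the
chain. Otherwise `x` must avoid the chain and lie below every `u i` with `ℓ(u i) = a i`; the set
of such elements not above `u 0` is a down-set, so it contains a minimal element of `P` as soon as
it is nonempty. If no bound `ℓ(u i) ≤ a i` is tight, nonemptiness comes from
`b(u 0) ≤ n - a 0 + 1 < n`; otherwise, for the first tight index `j`, an element below `u j` and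
not above `u 0` exists: if all of `Iio (u j)` lay above `u 0`, then `ℓ(u j)` would be `1 < a 0`
when `j = 0` and at most `h(u 0, u j) + 2 < a j` when `j > 0`.
-/

open Set

section

variable {X : Type*}

section ConsEquiv

variable [DecidableEq X] {n : ℕ}

def consEquiv (x : X) (g : {y // y ≠ x} ≃ Fin n) : X ≃ Fin (n + 1) :=
  (Equiv.optionSubtypeNe x).symm.trans (g.optionCongr.trans (finSuccEquiv n).symm)

variable {x : X} (g : {y // y ≠ x} ≃ Fin n)

@[simp] lemma consEquiv_self : consEquiv x g x = 0 := by
  simp [consEquiv]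

lemma consEquiv_of_ne {y : X} (hy : y ≠ x) : consEquiv x g y = (g ⟨y, hy⟩).succ := by
  simp [consEquiv, hy]

lemma strictMono_consEquiv [PartialOrder X] (hx : IsMin x) {g : {y // y ≠ x} ≃ Fin n}
    (hg : StrictMono g) : StrictMono (consEquiv x g) := by
  intro y z hyz
  have hz : z ≠ x := fun h => hx.not_lt (h ▸ hyz)
  by_cases hy : y = x
  · subst hy
    rw [consEquiv_self, consEquiv_of_ne g hz]
    exact Fin.succ_pos _
  · rw [consEquiv_of_ne g hy, consEquiv_of_ne g hz]
    exact Fin.succ_lt_succ_iff.2 (hg hyz)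

end ConsEquiv

lemma ncard_preimage_val_ne (x : X) (s : Set X) :
    ((↑) ⁻¹' s : Set {y // y ≠ x}).ncard = (s \ {x}).ncard := by
  rw [← ncard_image_of_injective _ Subtype.val_injective, image_preimage_eq_inter_range,
    Subtype.range_coe_subtype]
  rfl

lemma Nat.card_subtype_ne [Finite X] (x : X) : Nat.card {y // y ≠ x} = Nat.card X - 1 := by
  have h := ncard_preimage_val_ne x univ
  rw [preimage_univ, ncard_univ] at h
  rw [h, ← ncard_univ, ← ncard_sdiff_singleton_add_one (mem_univ x), Nat.add_sub_cancel]

variable [PartialOrder X] {ι : Type*}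

lemma isMin_of_ncard_Iic_le_one [Finite X] {x : X} (h : (Iic x).ncard ≤ 1) : IsMin x :=
  fun y hy => ((ncard_le_one_iff).1 h (le_refl x) hy).le

structure VanishingConditions [LT ι] (u : ι → X) (a : ι → ℕ) : Prop where
  ncard_Iic_le : ∀ i, (Iic (u i)).ncard ≤ a i
  ncard_Ici_add_le : ∀ i, (Ici (u i)).ncard + a i ≤ Nat.card X + 1
  ncard_Ioo_add_lt : ∀ i j, i < j → (Ioo (u i) (u j)).ncard + a i < a j

namespace VanishingConditions

lemma of_strictMono [Finite X] [Preorder ι] {u : ι → X} (hu : StrictMono u) {a : ι → ℕ}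
    {n : ℕ} (f : X ≃ Fin n) (hf : StrictMono f) (hfu : ∀ i, (f (u i) : ℕ) + 1 = a i) :
    VanishingConditions u a where
  ncard_Iic_le i := by
    have h := ncard_le_ncard_of_injOn (s := Iic (u i)) (t := Iic (f (u i))) f
      (fun y (hy : y ≤ u i) => hf.monotone hy) f.injective.injOn
    rwa [← Finset.coe_Iic (f (u i)), ncard_coe_finset, Fin.card_Iic, hfu] at h
  ncard_Ici_add_le i := by
    have h := ncard_le_ncard_of_injOn (s := Ici (u i)) (t := Ici (f (u i))) f
      (fun y (hy : u i ≤ y) => hf.monotone hy) f.injective.injOn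
    rw [← Finset.coe_Ici (f (u i)), ncard_coe_finset, Fin.card_Ici] at h
    have := hfu i
    have := (f (u i)).isLt
    rw [Nat.card_eq_of_equiv_fin f]
    omega
  ncard_Ioo_add_lt i j hij := by
    have h := ncard_le_ncard_of_injOn (t := Ioo (f (u i)) (f (u j))) f
      (fun y (hy : y ∈ Ioo (u i) (u j)) => ⟨hf hy.1, hf hy.2⟩) f.injective.injOn
    rw [← Finset.coe_Ioo (f (u i)), ncard_coe_finset, Fin.card_Ioo] at h
    have := hfu i
    have := hfu j
    have : f (u i) < f (u j) := hf (hu hij)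
    omega

lemma comp [Preorder ι] {κ : Type*} [Preorder κ] {u : ι → X} {a : ι → ℕ}
    (hV : VanishingConditions u a) {e : κ → ι} (he : StrictMono e) :
    VanishingConditions (u ∘ e) (a ∘ e) where
  ncard_Iic_le i := hV.ncard_Iic_le (e i)
  ncard_Ici_add_le i := hV.ncard_Ici_add_le (e i)
  ncard_Ioo_add_lt i j hij := hV.ncard_Ioo_add_lt (e i) (e j) (he hij)

lemma one_le [Finite X] [LT ι] {u : ι → X} {a : ι → ℕ} (hV : VanishingConditions u a) (i : ι) :
    1 ≤ a i :=
  ((ncard_pos (s := Iic (u i))).2 nonempty_Iic).trans_le (hV.ncard_Iic_le i)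

lemma restrict [Finite X] [LT ι] {u : ι → X} {a : ι → ℕ} (hV : VanishingConditions u a)
    {x : X} (hx : IsMin x) (hux : ∀ i, u i ≠ x) (hlt : ∀ i, x < u i ∨ (Iic (u i)).ncard < a i) :
    VanishingConditions (fun i => (⟨u i, hux i⟩ : {y // y ≠ x})) (fun i => a i - 1) where
  ncard_Iic_le i := by
    show (((↑) ⁻¹' Iic (u i)) : Set {y // y ≠ x}).ncard ≤ a i - 1
    rw [ncard_preimage_val_ne]
    have := hV.ncard_Iic_le i
    by_cases hxu : x ∈ Iic (u i)
    · have := ncard_sdiff_singleton_add_one hxu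
      omega
    · rw [sdiff_singleton_eq_self hxu]
      have := (hlt i).resolve_left fun h => hxu h.le
      omega
  ncard_Ici_add_le i := by
    show (((↑) ⁻¹' Ici (u i)) : Set {y // y ≠ x}).ncard + (a i - 1)
      ≤ Nat.card {y // y ≠ x} + 1
    have hxu : x ∉ Ici (u i) := fun h => hux i (le_antisymm h (hx h))
    rw [ncard_preimage_val_ne, sdiff_singleton_eq_self hxu, Nat.card_subtype_ne]
    have := hV.ncard_Ici_add_le i
    have := hV.one_le i
    have : 0 < Nat.card X := Nat.card_pos_iff.2 ⟨⟨x⟩, inferInstance⟩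
    omega
  ncard_Ioo_add_lt i j hij := by
    show (((↑) ⁻¹' Ioo (u i) (u j)) : Set {y // y ≠ x}).ncard + (a i - 1) < a j - 1
    have hxu : x ∉ Ioo (u i) (u j) := fun h => hx.not_lt h.1
    rw [ncard_preimage_val_ne, sdiff_singleton_eq_self hxu]
    have := hV.ncard_Ioo_add_lt i j hij
    have := hV.one_le i
    omega

lemma exists_not_le [Finite X] [LT ι] {u : ι → X} {a : ι → ℕ} (hV : VanishingConditions u a)
    {i : ι} (hai : 2 ≤ a i) : ∃ z, ¬ u i ≤ z := by
  by_contra! h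
  have := hV.ncard_Ici_add_le i
  rw [eq_univ_of_forall (s := Ici (u i)) h, ncard_univ] at this
  omega

lemma exists_lt_not_le [Finite X] {k : ℕ} {u : Fin (k + 1) → X} {a : Fin (k + 1) → ℕ}
    (hV : VanishingConditions u a) (ha : 2 ≤ a 0) {j : Fin (k + 1)}
    (hj : (Iic (u j)).ncard = a j) : ∃ z < u j, ¬ u 0 ≤ z := by
  by_contra! h
  rcases eq_or_ne j 0 with rfl | hj0
  · have hsub : Iic (u 0) ⊆ {u 0} := fun z (hz : z ≤ u 0) =>
      eq_of_le_of_not_lt hz fun hz0 => not_le_of_gt hz0 (h z hz0)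
    have := ncard_le_ncard hsub
    rw [ncard_singleton] at this
    omega
  · have hsub : Iic (u j) ⊆ insert (u 0) (insert (u j) (Ioo (u 0) (u j))) := by
      intro z (hz : z ≤ u j)
      rcases hz.eq_or_lt with rfl | hzj
      · exact mem_insert_of_mem _ (mem_insert _ _)
      · rcases (h z hzj).eq_or_lt with rfl | h0z
        · exact mem_insert _ _
        · exact mem_insert_of_mem _ (mem_insert_of_mem _ ⟨h0z, hzj⟩)
    have := (ncard_le_ncard hsub).trans ((ncard_insert_le _ _).trans
      (Nat.add_le_add_right (ncard_insert_le _ _) 1))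
    have := hV.ncard_Ioo_add_lt 0 j (Fin.pos_iff_ne_zero.2 hj0)
    omega

lemma exists_isMin_not_le [Finite X] {k : ℕ} {u : Fin (k + 1) → X} (hu : StrictMono u)
    {a : Fin (k + 1) → ℕ} (hV : VanishingConditions u a) (ha : 2 ≤ a 0) :
    ∃ x, IsMin x ∧ ¬ u 0 ≤ x ∧ ∀ i, x < u i ∨ (Iic (u i)).ncard < a i := by
  set S : Set X := {z | ¬ u 0 ≤ z ∧ ∀ i, (Iic (u i)).ncard = a i → z < u i}
  have hS : ∀ ⦃y z⦄, z ∈ S → y ≤ z → y ∈ S := fun y z hz hyz =>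
    ⟨fun h => hz.1 (h.trans hyz), fun i hi => hyz.trans_lt (hz.2 i hi)⟩
  obtain ⟨z, hz⟩ : S.Nonempty := by
    by_cases htight : ∃ i, (Iic (u i)).ncard = a i
    · obtain ⟨i, hi⟩ := htight
      obtain ⟨j, -, hj⟩ := Finite.exists_le_minimal (p := fun i => (Iic (u i)).ncard = a i) hi
      obtain ⟨z, hzj, hz0⟩ := hV.exists_lt_not_le ha hj.1
      exact ⟨z, hz0, fun i hi => hzj.trans_le (hu.monotone ((le_total j i).elim id (hj.2 hi)))⟩
    · obtain ⟨z, hz⟩ := hV.exists_not_le ha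
      exact ⟨z, hz, fun i hi => (htight ⟨i, hi⟩).elim⟩
  obtain ⟨x, -, hx⟩ := Finite.exists_le_minimal hz
  rw [minimal_iff_isMin hS] at hx
  exact ⟨x, hx.2, hx.1.1, fun i => (hV.ncard_Iic_le i).eq_or_lt.imp_left (hx.1.2 i)⟩

theorem exists_strictMono_equiv_fin [Finite X] {n : ℕ} (hn : Nat.card X = n) {k : ℕ}
    {u : Fin k → X} (hu : StrictMono u) {a : Fin k → ℕ} (hV : VanishingConditions u a) :
    ∃ f : X ≃ Fin n, StrictMono f ∧ ∀ i, (f (u i) : ℕ) + 1 = a i := by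
  induction n generalizing X k with
  | zero =>
    have := Finite.card_eq_zero_iff.1 hn
    exact ⟨Equiv.equivOfIsEmpty _ _, fun x => isEmptyElim x, fun i => isEmptyElim (u i)⟩
  | succ n ih =>
    classical
    have step (x : X) (hx : IsMin x) {m : ℕ} {v : Fin m → X} (hv : StrictMono v)
        (hvx : ∀ i, v i ≠ x) {b : Fin m → ℕ} (hV : VanishingConditions v b)
        (hlt : ∀ i, x < v i ∨ (Iic (v i)).ncard < b i) :
        ∃ f : X ≃ Fin (n + 1), StrictMono f ∧ f x = 0 ∧ ∀ i, (f (v i) : ℕ) + 1 = b i := by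
      obtain ⟨g, hg, hgv⟩ := ih (X := {y // y ≠ x}) (by rw [Nat.card_subtype_ne, hn]; rfl)
        (fun i j hij => hv hij) (hV.restrict hx hvx hlt)
      refine ⟨consEquiv x g, strictMono_consEquiv hx hg, consEquiv_self g, fun i => ?_⟩
      have := hgv i
      rw [consEquiv_of_ne g (hvx i), Fin.val_succ]
      omega
    rcases k with _ | k
    · obtain ⟨y⟩ : Nonempty X := (Nat.card_pos_iff.1 (hn ▸ n.succ_pos)).1
      obtain ⟨x, -, hx⟩ := Finite.exists_le_minimal (p := fun _ : X => True) (a := y) trivial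
      obtain ⟨f, hf, -, -⟩ := step x (minimal_true.1 hx) hu finZeroElim hV finZeroElim
      exact ⟨f, hf, finZeroElim⟩
    by_cases ha0 : a 0 = 1
    · have hmin : IsMin (u 0) := isMin_of_ncard_Iic_le_one ((hV.ncard_Iic_le 0).trans_eq ha0)
      obtain ⟨f, hf, hf0, hfu⟩ := step (u 0) hmin (hu.comp Fin.strictMono_succ)
        (fun i => (hu i.succ_pos).ne') (hV.comp Fin.strictMono_succ)
        (fun i => .inl (hu i.succ_pos))
      exact ⟨f, hf, Fin.cases (by rw [hf0, ha0]; rfl) hfu⟩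
    · obtain ⟨x, hx, hx0, hlt⟩ := hV.exists_isMin_not_le hu (by have := hV.one_le 0; omega)
      obtain ⟨f, hf, -, hfu⟩ := step x hx hu (fun i h => hx0 (h ▸ hu.monotone i.zero_le)) hV hlt
      exact ⟨f, hf, hfu⟩

end VanishingConditions

end

theorem vanishing_conditions_general (X : Type*) [Fintype X] [PartialOrder X]
    (k : ℕ) (u : Fin k → X) (hu : StrictMono u)
    (a : Fin k → ℕ) :
    (∃ f : X ≃ Fin (Fintype.card X),
        (∀ ⦃x y : X⦄, x < y → f x < f y) ∧ ∀ i, (f (u i) : ℕ) + 1 = a i) ↔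
      ((∀ i, Nat.card {y : X // y ≤ u i} ≤ a i) ∧
       (∀ i, Nat.card {y : X // u i ≤ y} + a i ≤ Fintype.card X + 1) ∧
       (∀ i j : Fin k, i < j →
          Nat.card {z : X // u i < z ∧ z < u j} + a i < a j)) := by
  have hX : Nat.card X = Fintype.card X := Nat.card_eq_fintype_card
  constructor
  · rintro ⟨f, hf, hfu⟩
    have hV := VanishingConditions.of_strictMono hu f hf hfu
    exact ⟨hV.ncard_Iic_le, hX ▸ hV.ncard_Ici_add_le, hV.ncard_Ioo_add_lt⟩
  · rintro ⟨hl, hb, hh⟩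
    exact VanishingConditions.exists_strictMono_equiv_fin hX hu ⟨hl, hX ▸ hb, hh⟩

/-- **Vanishing conditions for the generalized Stanley inequality.**
For a chain `u 0 ≺ … ≺ u (k-1)` and integers `1 ≤ a 0 < … < a (k-1) ≤ n`,
there is a linear extension `f` with `f (u i) = a i` for all `i` if and only if
`ℓ(u i) ≤ a i`, `b(u i) ≤ n − a i + 1` for all `i`, and
`a j − a i > h(u i, u j)` for all `i < j`. -/
theorem vanishing_conditions (X : Type*) [Fintype X] [PartialOrder X]
    (k : ℕ) (u : Fin k → X) (hu : StrictMono u)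
    (a : Fin k → ℕ) (ha : StrictMono a)
    (ha1 : ∀ i, 1 ≤ a i) (han : ∀ i, a i ≤ Fintype.card X) :
    (∃ f : X ≃ Fin (Fintype.card X),
        (∀ ⦃x y : X⦄, x < y → f x < f y) ∧ ∀ i, (f (u i) : ℕ) + 1 = a i) ↔
      ((∀ i, Nat.card {y : X // y ≤ u i} ≤ a i) ∧
       (∀ i, Nat.card {y : X // u i ≤ y} + a i ≤ Fintype.card X + 1) ∧
       (∀ i j : Fin k, i < j →
          Nat.card {z : X // u i < z ∧ z < u j} + a i < a j)) :=
  vanishing_conditions_general X k u hu a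
end

section
/- Let P = (X, ≺) be a finite poset and let x, y ∈ X be two distinct minimal elements. Then for every integer t ≥ 1, Ω(P,t) · Ω(P∖{x,y}, t) ≥ Ω(P∖x, t) · Ω(P∖y, t). -/
open Finset

noncomputable instance OrderHom.instFintype {α β : Type*} [Preorder α] [Preorder β] [Finite α]
    [Finite β] : Fintype (α →o β) :=
  haveI : Finite (α →o β) := Finite.of_injective _ DFunLike.coe_injective
  Fintype.ofFinite _

instance OrderHom.instDistribLattice {α β : Type*} [Preorder α] [DistribLattice β] :
    DistribLattice (α →o β) :=
  { OrderHom.lattice with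
    le_sup_inf := fun f g h a => le_sup_inf (x := f a) (y := g a) (z := h a) }

/-- Harris' inequality: the FKG inequality for the uniform measure. -/
theorem Monotone.sum_mul_sum_le_card_mul_sum_mul {L : Type*} [DistribLattice L] [Fintype L]
    {f g : L → ℕ} (hf : Monotone f) (hg : Monotone g) :
    (∑ a, f a) * ∑ a, g a ≤ Fintype.card L * ∑ a, f a * g a := by
  simpa using fkg f g 1 (fun _ => Nat.zero_le _) (fun _ => Nat.zero_le _)
    (fun _ => Nat.zero_le _) hf hg (fun _ _ => le_rfl)

theorem OrderHom.monotone_ncard_lowerBounds_image {α β : Type*} [Preorder α] [Preorder β]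
    [Finite β] (s : Set α) : Monotone fun h : α →o β => (lowerBounds (h '' s)).ncard := by
  intro h h' hle
  refine Set.ncard_le_ncard ?_
  rintro v hv _ ⟨z, hz, rfl⟩
  exact (hv (Set.mem_image_of_mem h hz)).trans (hle z)

theorem orderPoly_eq_card_orderHom (X : Type*) [Fintype X] [PartialOrder X] (t : ℕ) :
    orderPoly X t = Nat.card (X →o Fin t) :=
  Nat.card_congr ⟨fun g => ⟨g.1, g.2⟩, fun f => ⟨f, f.monotone⟩, fun _ => rfl, fun _ => rfl⟩

section ExtendFromMinimal

variable {W T β : Type*} [PartialOrder W] [Preorder T] [Preorder β] {M : Finset W} {ι : T ↪o W}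

open Classical in
noncomputable def OrderHom.extendOfIsMin (hM : ∀ m ∈ M, IsMin m)
    (hι : ∀ z, z ∈ Set.range ι ↔ z ∉ M) (h : T →o β)
    (v : ∀ m : M, lowerBounds (h '' {z | (m : W) ≤ ι z})) : W →o β where
  toFun z := if hz : z ∈ M then v ⟨z, hz⟩ else h ((hι z).2 hz).choose
  monotone' p q hpq := by
    by_cases hq : q ∈ M
    · obtain rfl := (hM q hq).eq_of_le hpq
      rfl
    have hιq := ((hι q).2 hq).choose_spec
    by_cases hp : p ∈ M
    · simp only [dif_pos hp, dif_neg hq]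
      exact (v ⟨p, hp⟩).2 ⟨_, show p ≤ ι _ by rwa [hιq], rfl⟩
    · simp only [dif_neg hp, dif_neg hq]
      exact h.monotone (ι.le_iff_le.1 (by rwa [((hι p).2 hp).choose_spec, hιq]))

theorem OrderHom.extendOfIsMin_apply_of_mem (hM : ∀ m ∈ M, IsMin m)
    (hι : ∀ z, z ∈ Set.range ι ↔ z ∉ M) (h : T →o β)
    (v : ∀ m : M, lowerBounds (h '' {z | (m : W) ≤ ι z})) (m : M) :
    extendOfIsMin hM hι h v m = v m :=
  dif_pos m.2

theorem OrderHom.extendOfIsMin_apply_of_notMem (hM : ∀ m ∈ M, IsMin m)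
    (hι : ∀ z, z ∈ Set.range ι ↔ z ∉ M) (h : T →o β)
    (v : ∀ m : M, lowerBounds (h '' {z | (m : W) ≤ ι z})) {z : W} (hz : z ∉ M) {a : T}
    (ha : ι a = z) : extendOfIsMin hM hι h v z = h a :=
  (dif_neg hz).trans (congrArg h (ι.injective (((hι z).2 hz).choose_spec.trans ha.symm)))

noncomputable def OrderHom.restrictFiberEquiv (hM : ∀ m ∈ M, IsMin m)
    (hι : ∀ z, z ∈ Set.range ι ↔ z ∉ M) (h : T →o β) :
    {k : W →o β // k.comp ι.toOrderHom = h} ≃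
      ∀ m : M, lowerBounds (h '' {z | (m : W) ≤ ι z}) where
  toFun k m := ⟨k.1 m, by
    rintro _ ⟨z, hz, rfl⟩
    rw [← DFunLike.congr_fun k.2 z]
    exact k.1.monotone hz⟩
  invFun v := ⟨extendOfIsMin hM hι h v, DFunLike.ext _ _ fun a =>
    extendOfIsMin_apply_of_notMem hM hι h v ((hι _).1 ⟨a, rfl⟩) rfl⟩
  left_inv k := by
    obtain ⟨k, rfl⟩ := k
    refine Subtype.ext (DFunLike.ext _ _ fun z => ?_)
    dsimp only
    by_cases hz : z ∈ M
    · exact extendOfIsMin_apply_of_mem hM hι (k.comp ι.toOrderHom) _ ⟨z, hz⟩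
    · obtain ⟨a, rfl⟩ := (hι z).2 hz
      exact extendOfIsMin_apply_of_notMem hM hι (k.comp ι.toOrderHom) _ hz rfl
  right_inv v := funext fun m => Subtype.ext (extendOfIsMin_apply_of_mem hM hι h v m)

theorem Nat.card_orderHom_eq_sum_prod [Finite W] [Finite T] [Finite β]
    (hM : ∀ m ∈ M, IsMin m) (hι : ∀ z, z ∈ Set.range ι ↔ z ∉ M) :
    Nat.card (W →o β) =
      ∑ h : T →o β, ∏ m ∈ M, (lowerBounds (h '' {z | m ≤ ι z})).ncard := by
  rw [← Nat.card_congr (Equiv.sigmaFiberEquiv fun k : W →o β => k.comp ι.toOrderHom),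
    Nat.card_sigma]
  refine Fintype.sum_congr _ _ fun h => ?_
  rw [Nat.card_congr (OrderHom.restrictFiberEquiv hM hι h), Nat.card_pi, ← prod_coe_sort M]
  simp only [Nat.card_coe_set_eq]

end ExtendFromMinimal

theorem orderPoly_eq_sum_mul {X : Type*} [Fintype X] [PartialOrder X] {x y : X} (hxy : x ≠ y)
    (hx : IsMin x) (hy : IsMin y) (t : ℕ) :
    orderPoly X t = ∑ h : {z : X // z ≠ x ∧ z ≠ y} →o Fin t,
      (lowerBounds (h '' {z | x ≤ z.1})).ncard * (lowerBounds (h '' {z | y ≤ z.1})).ncard := by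
  classical
  rw [orderPoly_eq_card_orderHom, Nat.card_orderHom_eq_sum_prod (M := {x, y})
    (ι := OrderEmbedding.subtype fun z => z ≠ x ∧ z ≠ y) (by simp [hx, hy]) (by simp)]
  simp only [prod_pair hxy]
  rfl

theorem orderPoly_subtype_eq_sum {X : Type*} [Fintype X] [PartialOrder X] {p r : X → Prop}
    [DecidablePred p] {m : X} (hm : IsMin m) (hpm : p m) (hr : ∀ z, r z ↔ p z ∧ z ≠ m)
    (t : ℕ) :
    orderPoly {z // p z} t =
      ∑ h : {z // r z} →o Fin t, (lowerBounds (h '' {z | m ≤ z.1})).ncard := by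
  have hm' : IsMin (⟨m, hpm⟩ : {z // p z}) := fun _ hb => hm hb
  rw [orderPoly_eq_card_orderHom, Nat.card_orderHom_eq_sum_prod (M := {⟨m, hpm⟩})
    (ι := Subtype.orderEmbedding fun z hz => ((hr z).1 hz).1) (by simpa using hm')
    (by simp +contextual [hr, Subtype.ext_iff])]
  simp only [prod_singleton]
  rfl

theorem orderPoly_correlation_min_min_general (X : Type*) [Fintype X] [DecidableEq X]
    [PartialOrder X] (x y : X) (hxy : x ≠ y) (hx : IsMin x) (hy : IsMin y)
    (t : ℕ) :
    orderPoly {z : X // z ≠ x} t * orderPoly {z : X // z ≠ y} t ≤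
      orderPoly X t * orderPoly {z : X // z ≠ x ∧ z ≠ y} t := by
  rw [mul_comm (orderPoly {z : X // z ≠ x} t), mul_comm (orderPoly X t),
    orderPoly_subtype_eq_sum (p := (· ≠ x)) hy hxy.symm (fun _ => Iff.rfl),
    orderPoly_subtype_eq_sum (p := (· ≠ y)) hx hxy (fun _ => and_comm),
    orderPoly_eq_sum_mul hxy hx hy, orderPoly_eq_card_orderHom, Nat.card_eq_fintype_card]
  refine Monotone.sum_mul_sum_le_card_mul_sum_mul (L := {z : X // z ≠ x ∧ z ≠ y} →o Fin t)
    ?_ ?_ <;> exact OrderHom.monotone_ncard_lowerBounds_image _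

/-- For two distinct minimal elements `x, y` of a finite poset `P` and any `t ≥ 1`:
`Ω(P,t) · Ω(P∖{x,y},t) ≥ Ω(P∖x,t) · Ω(P∖y,t)`. -/
theorem orderPoly_correlation_min_min (X : Type*) [Fintype X] [DecidableEq X]
    [PartialOrder X] (x y : X) (hxy : x ≠ y) (hx : IsMin x) (hy : IsMin y)
    (t : ℕ) (ht : 1 ≤ t) :
    orderPoly {z : X // z ≠ x} t * orderPoly {z : X // z ≠ y} t ≤
      orderPoly X t * orderPoly {z : X // z ≠ x ∧ z ≠ y} t :=
  orderPoly_correlation_min_min_general X x y hxy hx hy t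
end

section
/- Let P = (X, ≺) be a finite poset, let x ∈ X be a minimal element and let y ∈ X be a maximal element with x ≠ y, such that y does not cover x. Then for every integer t ≥ 1, Ω(P,t) · Ω(P∖{x,y}, t) ≤ Ω(P∖x, t) · Ω(P∖y, t). -/
/-!
Monotone maps `X → α` into a finite bounded distributive lattice form a sublattice `S` of
`X → α`. Monotone maps on `X` with a lower set `L` deleted are the maps in `S` that are `⊥` on
`L`, and with an upper set `U` deleted those that are `⊤` on `U`; these conditions cut out a
lower set `A` and an upper set `B` of functions. Daykin's inequality
`#S * #T ≤ #(S ⊼ T) * #(S ⊻ T)` for `T = S ∩ A ∩ B` gives the claim, because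
`S ⊼ T ⊆ S ∩ A` and `S ⊻ T ⊆ S ∩ B`. The theorem is the case `α = Fin t`, `L = {x}`, `U = {y}`.
-/

open Finset
open scoped FinsetFamily

theorem Finset.card_mul_card_inter_inter_le {α : Type*} [DistribLattice α] [DecidableEq α]
    {s t u : Finset α} (hs : IsSublattice (s : Set α)) (ht : IsLowerSet (t : Set α))
    (hu : IsUpperSet (u : Set α)) :
    #s * #(s ∩ t ∩ u) ≤ #(s ∩ t) * #(s ∩ u) := by
  have h_infs : s ⊼ (s ∩ t ∩ u) ⊆ s ∩ t := by
    simp only [subset_iff, mem_infs, mem_inter]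
    rintro _ ⟨a, ha, b, ⟨⟨hbs, hbt⟩, -⟩, rfl⟩
    exact ⟨hs.infClosed ha hbs, ht inf_le_right hbt⟩
  have h_sups : s ⊻ (s ∩ t ∩ u) ⊆ s ∩ u := by
    simp only [subset_iff, mem_sups, mem_inter]
    rintro _ ⟨a, ha, b, ⟨⟨hbs, -⟩, hbu⟩, rfl⟩
    exact ⟨hs.supClosed ha hbs, hu le_sup_right hbu⟩
  calc #s * #(s ∩ t ∩ u) ≤ #(s ⊼ (s ∩ t ∩ u)) * #(s ⊻ (s ∩ t ∩ u)) :=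
        le_card_infs_mul_card_sups _ _
    _ ≤ #(s ∩ t) * #(s ∩ u) := by gcongr

section FunctionSpace

variable {X α : Type*}

theorem isSublattice_setOf_monotone [Preorder X] [Lattice α] :
    IsSublattice {f : X → α | Monotone f} :=
  ⟨fun _ hf _ hg => hf.sup hg, fun _ hf _ hg => hf.inf hg⟩

theorem isLowerSet_setOf_forall_eq_bot [PartialOrder α] [OrderBot α] (L : Set X) :
    IsLowerSet {f : X → α | ∀ z ∈ L, f z = ⊥} :=
  fun _ _ hgf hf z hz => le_bot_iff.1 (hf z hz ▸ hgf z)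

theorem isUpperSet_setOf_forall_eq_top [PartialOrder α] [OrderTop α] (U : Set X) :
    IsUpperSet {f : X → α | ∀ z ∈ U, f z = ⊤} :=
  fun _ _ hfg hf z hz => top_le_iff.1 (hf z hz ▸ hfg z)

end FunctionSpace

section Extension

variable {X α : Type*} [Preorder X] [Preorder α] [BoundedOrder α] {L U : Set X} {p : X → Prop}

open Classical in
noncomputable def extendBotTop (p : X → Prop) (L : Set X) (g : {z // p z} → α) (z : X) : α :=
  if h : p z then g ⟨z, h⟩ else if z ∈ L then ⊥ else ⊤

theorem monotone_extendBotTop (hL : IsLowerSet L) (hU : IsUpperSet U)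
    (hp : ∀ z, p z ↔ z ∉ L ∧ z ∉ U) {g : {z // p z} → α} (hg : Monotone g) :
    Monotone (extendBotTop p L g) := by
  intro a b hab
  unfold extendBotTop
  by_cases haL : a ∈ L
  · simp [haL, (hp a).not.2 (by simp [haL])]
  have hbL : b ∉ L := fun hbL => haL (hL hab hbL)
  by_cases hbU : b ∈ U
  · simp [hbL, (hp b).not.2 (by simp [hbU])]
  have ha : p a := (hp a).2 ⟨haL, fun haU => hbU (hU hab haU)⟩
  have hb : p b := (hp b).2 ⟨hbL, hbU⟩
  simpa [ha, hb] using hg (show (⟨a, ha⟩ : {z // p z}) ≤ ⟨b, hb⟩ from hab)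

noncomputable def extendBotTopEquiv (hL : IsLowerSet L) (hU : IsUpperSet U)
    (hLU : Disjoint L U) (hp : ∀ z, p z ↔ z ∉ L ∧ z ∉ U) :
    {g : {z // p z} → α // Monotone g} ≃
      {f : X → α // Monotone f ∧ (∀ z ∈ L, f z = ⊥) ∧ ∀ z ∈ U, f z = ⊤} where
  toFun g := ⟨extendBotTop p L g.1, monotone_extendBotTop hL hU hp g.2,
    fun z hz => by simp [extendBotTop, hz, hp],
    fun z hz => by simp [extendBotTop, hp, hz, hLU.notMem_of_mem_right hz]⟩
  invFun f := ⟨fun z => f.1 z, fun _ _ hab => f.2.1 hab⟩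
  left_inv g := by
    ext z
    simp [extendBotTop, z.2]
  right_inv f := by
    ext z
    by_cases hz : p z
    · simp [extendBotTop, hz]
    by_cases hzL : z ∈ L
    · simp [extendBotTop, hz, hzL, f.2.2.1 z hzL]
    · simp [extendBotTop, hz, hzL, f.2.2.2 z (by simpa [hzL] using (hp z).not.1 hz)]

end Extension

theorem natCard_monotone_mul_natCard_monotone_le {X α : Type*} [Preorder X] [Fintype X]
    [DistribLattice α] [BoundedOrder α] [Fintype α] {L U : Set X}
    (hL : IsLowerSet L) (hU : IsUpperSet U) (hLU : Disjoint L U) :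
    Nat.card {f : X → α // Monotone f} * Nat.card {g : {z // z ∉ L ∧ z ∉ U} → α // Monotone g} ≤
      Nat.card {g : {z // z ∉ L} → α // Monotone g} *
        Nat.card {g : {z // z ∉ U} → α // Monotone g} := by
  classical
  set S : Finset (X → α) := {f | Monotone f}
  set A : Finset (X → α) := {f | ∀ z ∈ L, f z = ⊥}
  set B : Finset (X → α) := {f | ∀ z ∈ U, f z = ⊤}
  have hS : Nat.card {f : X → α // Monotone f} = #S := by
    rw [Nat.card_eq_fintype_card, Fintype.card_subtype]
  have hSAB : Nat.card {g : {z // z ∉ L ∧ z ∉ U} → α // Monotone g} = #(S ∩ A ∩ B) := by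
    rw [Nat.card_congr (extendBotTopEquiv hL hU hLU fun _ => Iff.rfl), Nat.card_eq_fintype_card,
      Fintype.card_subtype, filter_and, filter_and, inter_assoc]
  have hSA : Nat.card {g : {z // z ∉ L} → α // Monotone g} = #(S ∩ A) := by
    rw [Nat.card_congr (extendBotTopEquiv hL isUpperSet_empty (Set.disjoint_empty L) (by simp)),
      Nat.card_eq_fintype_card, Fintype.card_subtype, ← filter_and]
    simp
  have hSB : Nat.card {g : {z // z ∉ U} → α // Monotone g} = #(S ∩ B) := by
    rw [Nat.card_congr (extendBotTopEquiv isLowerSet_empty hU (Set.empty_disjoint U) (by simp)),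
      Nat.card_eq_fintype_card, Fintype.card_subtype, ← filter_and]
    simp
  rw [hS, hSAB, hSA, hSB]
  apply card_mul_card_inter_inter_le
  · simpa only [S, coe_filter, mem_univ, true_and] using isSublattice_setOf_monotone
  · simpa only [A, coe_filter, mem_univ, true_and] using isLowerSet_setOf_forall_eq_bot L
  · simpa only [B, coe_filter, mem_univ, true_and] using isUpperSet_setOf_forall_eq_top U

theorem orderPoly_correlation_min_max_general (X : Type*) [Fintype X] [DecidableEq X]
    [PartialOrder X] (x y : X) (hxy : x ≠ y) (hx : IsMin x) (hy : IsMax y)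
    (t : ℕ) (ht : 1 ≤ t) :
    orderPoly X t * orderPoly {z : X // z ≠ x ∧ z ≠ y} t ≤
      orderPoly {z : X // z ≠ x} t * orderPoly {z : X // z ≠ y} t := by
  obtain ⟨n, rfl⟩ := Nat.exists_eq_add_of_le' ht
  exact natCard_monotone_mul_natCard_monotone_le (α := Fin (n + 1)) (L := {x}) (U := {y})
    (hx.Iic_eq ▸ isLowerSet_Iic x) (hy.Ici_eq ▸ isUpperSet_Ici y)
    (Set.disjoint_singleton.2 hxy)

/-- For a minimal element `x` and a maximal element `y ≠ x` of a finite poset `P`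
such that `y` does not cover `x`, and any `t ≥ 1`:
`Ω(P,t) · Ω(P∖{x,y},t) ≤ Ω(P∖x,t) · Ω(P∖y,t)`. -/
theorem orderPoly_correlation_min_max (X : Type*) [Fintype X] [DecidableEq X]
    [PartialOrder X] (x y : X) (hxy : x ≠ y) (hx : IsMin x) (hy : IsMax y)
    (hcov : ¬ x ⋖ y) (t : ℕ) (ht : 1 ≤ t) :
    orderPoly X t * orderPoly {z : X // z ≠ x ∧ z ≠ y} t ≤
      orderPoly {z : X // z ≠ x} t * orderPoly {z : X // z ≠ y} t :=
  orderPoly_correlation_min_max_general X x y hxy hx hy t ht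
end

section
/- Let P = (X, ≺) be a finite poset and let x ∈ X be a minimal element with b(x) > 1. Then for every integer t ≥ 1, b(x) · Ω(P,t) ≥ (t+1) · Ω(P∖x, t). -/
/-!
Write `Q = P ∖ x` and `W = {z ∈ Q | x < z}`, an upper set of `Q`. Since `x` is minimal, a
monotone map on `P` is a monotone map on `Q` together with a value `k` at `x` that is at most
its values on `W`; hence `Ω(P,t) = ∑_{k<t} A_k`, where `A_k` counts the monotone `g : Q → Fin t`
with `g ≥ k` on `W`. Let `B_k` count those that moreover vanish off `W`; shifting by `k` gives
`B_k = Ω(W,t-k)`. The Ahlswede–Daykin inequality in the distributive lattice `Q → Fin t` gives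
`A_k B_{k+1} ≤ A_{k+1} B_k`, so `A_k / B_k` increases and
`Ω(Q,t) ∑_{s≤t} Ω(W,s) = A_0 ∑_k B_k ≤ (∑_k A_k) B_0 = Ω(P,t) Ω(W,t)`.

On the other side, grouping monotone maps by their image writes `Ω(W,s) = ∑_l c_l C(s,l)` with
`c_l ≥ 0` vanishing for `l > |W|`; then `(t+1) C(t,l) = (l+1) C(t+1,l+1)` and the hockey-stick
identity give `(t+1) Ω(W,t) ≤ (|W|+1) ∑_{s≤t} Ω(W,s)`. Since `b(x) = |W| + 1`, the two
inequalities combine, and `Ω(W,t) > 0` cancels.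
-/

open Finset Function
open scoped SetFamily

theorem orderPoly_pos (Z : Type*) [Fintype Z] [PartialOrder Z] {t : ℕ} (ht : 0 < t) :
    0 < orderPoly Z t :=
  have : Nonempty {g : Z → Fin t // Monotone g} := ⟨⟨fun _ => ⟨0, ht⟩, monotone_const⟩⟩
  Nat.card_pos

theorem orderPoly_zero_s13 (Z : Type*) [Fintype Z] [PartialOrder Z] [Nonempty Z] :
    orderPoly Z 0 = 0 :=
  Nat.card_eq_zero.2 (Or.inl ⟨fun g => (g.1 (Classical.arbitrary Z)).elim0⟩)

section Surjections

variable {Z : Type*} [Preorder Z]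

variable (Z) in
noncomputable def numMonotoneSurj (l : ℕ) : ℕ :=
  Nat.card {f : Z → Fin l // Monotone f ∧ Surjective f}

theorem numMonotoneSurj_eq_zero [Finite Z] {l : ℕ} (h : Nat.card Z < l) :
    numMonotoneSurj Z l = 0 := by
  refine Nat.card_eq_zero.2 (Or.inl ⟨fun f => h.not_ge ?_⟩)
  simpa using Nat.card_le_card_of_surjective f.1 f.2.2

noncomputable def monotoneImageEquiv [Fintype Z] {β : Type*} [LinearOrder β] (S : Finset β) :
    {g : {g : Z → β // Monotone g} // univ.image g.1 = S} ≃
      {f : Z → Fin #S // Monotone f ∧ Surjective f} where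
  toFun g :=
    ⟨fun z => (S.orderIsoOfFin rfl).symm ⟨g.1.1 z, g.2.subset (mem_image_of_mem _ (mem_univ z))⟩,
    fun _ _ h => (S.orderIsoOfFin rfl).symm.monotone (g.1.2 h), fun i => by
      obtain ⟨z, -, hz⟩ := mem_image.1 (g.2.symm.subset (S.orderIsoOfFin rfl i).2)
      exact ⟨z, (S.orderIsoOfFin rfl).symm_apply_eq.2 (Subtype.ext hz)⟩⟩
  invFun f :=
    ⟨⟨fun z => S.orderEmbOfFin rfl (f.1 z), fun _ _ h => (S.orderEmbOfFin rfl).monotone (f.2.1 h)⟩,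
    by
      ext b
      simp only [mem_image, mem_univ, true_and]
      constructor
      · rintro ⟨z, rfl⟩
        exact S.orderEmbOfFin_mem rfl _
      · intro hb
        obtain ⟨i, hi⟩ := (S.orderIsoOfFin rfl).surjective ⟨b, hb⟩
        obtain ⟨z, rfl⟩ := f.2.2 i
        exact ⟨z, by simpa [← Finset.coe_orderIsoOfFin_apply] using congrArg Subtype.val hi⟩⟩
  left_inv g := by ext z; simp [← Finset.coe_orderIsoOfFin_apply]
  right_inv f := by ext z; simp [← Finset.coe_orderIsoOfFin_apply]

end Surjections

theorem orderPoly_eq_sum_numMonotoneSurj_card (Z : Type*) [Fintype Z] [PartialOrder Z] (s : ℕ) :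
    orderPoly Z s = ∑ S : Finset (Fin s), numMonotoneSurj Z #S := by
  rw [orderPoly, ← Nat.card_congr
    (Equiv.sigmaFiberEquiv fun g : {g : Z → Fin s // Monotone g} => univ.image g.1), Nat.card_sigma]
  exact sum_congr rfl fun S _ => Nat.card_congr (monotoneImageEquiv S)

theorem orderPoly_eq_sum_choose (Z : Type*) [Fintype Z] [PartialOrder Z] (s : ℕ) :
    orderPoly Z s = ∑ l ∈ range (Nat.card Z + 1), numMonotoneSurj Z l * s.choose l := by
  rw [orderPoly_eq_sum_numMonotoneSurj_card, ← powerset_univ, sum_powerset_apply_card, card_univ,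
    Fintype.card_fin]
  simp_rw [smul_eq_mul, mul_comm (s.choose _)]
  have hM : s + 1 ≤ s + Nat.card Z + 1 := by omega
  have hN : Nat.card Z + 1 ≤ s + Nat.card Z + 1 := by omega
  rw [← eventually_constant_sum (fun l hl => by rw [Nat.choose_eq_zero_of_lt hl, mul_zero]) hM,
    eventually_constant_sum (fun l hl => by rw [numMonotoneSurj_eq_zero hl, zero_mul]) hN]

theorem Nat.sum_range_choose_eq_choose_succ (t l : ℕ) :
    ∑ s ∈ range (t + 1), s.choose l = (t + 1).choose (l + 1) := by
  induction t with
  | zero => rcases l with _ | _ | l <;> simp [Nat.choose_eq_zero_of_lt]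
  | succ t ih => rw [sum_range_succ, ih, Nat.choose_succ_succ' (t + 1), add_comm]

theorem succ_mul_orderPoly_le (Z : Type*) [Fintype Z] [PartialOrder Z] (t : ℕ) :
    (t + 1) * orderPoly Z t ≤ (Nat.card Z + 1) * ∑ s ∈ range (t + 1), orderPoly Z s := by
  set n := Nat.card Z
  calc (t + 1) * orderPoly Z t
      = ∑ l ∈ range (n + 1), numMonotoneSurj Z l * ((t + 1).choose (l + 1) * (l + 1)) := by
        simp_rw [orderPoly_eq_sum_choose, mul_sum, ← Nat.add_one_mul_choose_eq]
        exact sum_congr rfl fun l _ => by ring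
    _ ≤ ∑ l ∈ range (n + 1), numMonotoneSurj Z l * ((t + 1).choose (l + 1) * (n + 1)) := by
        gcongr with l hl
        exact Nat.lt_succ_iff.1 (mem_range.1 hl)
    _ = (n + 1) * ∑ l ∈ range (n + 1), ∑ s ∈ range (t + 1), numMonotoneSurj Z l * s.choose l := by
        simp_rw [← mul_sum, Nat.sum_range_choose_eq_choose_succ, mul_sum]
        exact sum_congr rfl fun l _ => by ring
    _ = (n + 1) * ∑ s ∈ range (t + 1), orderPoly Z s := by
        rw [sum_comm]
        simp_rw [orderPoly_eq_sum_choose]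
        rfl

theorem Set.le_ncard_infs_mul_ncard_sups {α : Type*} [DistribLattice α] [Finite α]
    (s t : Set α) : s.ncard * t.ncard ≤ (s ⊼ t).ncard * (s ⊻ t).ncard := by
  classical
  lift s to Finset α using s.toFinite
  lift t to Finset α using t.toFinite
  simpa only [← Finset.coe_sups, ← Finset.coe_infs, Set.ncard_coe_finset]
    using Finset.le_card_infs_mul_card_sups s t

theorem Nat.mul_sum_le_sum_mul_of_cross_le {a b : ℕ → ℕ} {n : ℕ} (hb : ∀ k < n, 0 < b k)
    (hab : ∀ k, a k * b (k + 1) ≤ a (k + 1) * b k) :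
    a 0 * ∑ k ∈ range n, b k ≤ (∑ k ∈ range n, a k) * b 0 := by
  have key : ∀ k < n, a 0 * b k ≤ a k * b 0 := by
    intro k
    induction k with
    | zero => exact fun _ => le_rfl
    | succ k ih =>
      intro hk
      refine Nat.le_of_mul_le_mul_right ?_ (hb k (by omega))
      calc a 0 * b (k + 1) * b k = a 0 * b k * b (k + 1) := by ring
        _ ≤ a k * b 0 * b (k + 1) := Nat.mul_le_mul_right _ (ih (by omega))
        _ = a k * b (k + 1) * b 0 := by ring
        _ ≤ a (k + 1) * b k * b 0 := Nat.mul_le_mul_right _ (hab k)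
        _ = a (k + 1) * b 0 * b k := by ring
  rw [mul_sum, sum_mul]
  exact sum_le_sum fun k hk => key k (mem_range.1 hk)

section Correlation

variable {Y : Type*} [PartialOrder Y] (W : Set Y) (t : ℕ)

def monotoneGEOn (k : ℕ) : Set (Y → Fin t) :=
  {g | Monotone g ∧ ∀ z ∈ W, k ≤ (g z : ℕ)}

def supportedMonotoneGEOn (k : ℕ) : Set (Y → Fin t) :=
  {g ∈ monotoneGEOn W t k | ∀ z ∉ W, (g z : ℕ) = 0}

theorem monotoneGEOn_sups_subset (k : ℕ) :
    monotoneGEOn W t k ⊻ supportedMonotoneGEOn W t (k + 1) ⊆ monotoneGEOn W t (k + 1) := by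
  rw [Set.sups_subset_iff]
  rintro a ⟨ha, -⟩ b ⟨⟨hb, hbW⟩, -⟩
  exact ⟨ha.sup hb, fun z hz => (hbW z hz).trans (le_sup_right : b z ≤ a z ⊔ b z)⟩

theorem monotoneGEOn_infs_subset (k : ℕ) :
    monotoneGEOn W t k ⊼ supportedMonotoneGEOn W t (k + 1) ⊆ supportedMonotoneGEOn W t k := by
  rw [Set.infs_subset_iff]
  rintro a ⟨ha, haW⟩ b ⟨⟨hb, hbW⟩, hb0⟩
  refine ⟨⟨ha.inf hb, fun z hz => ?_⟩, fun z hz => ?_⟩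
  · exact le_min (haW z hz) ((hbW z hz).trans' k.le_succ)
  · have := hb0 z hz
    exact Nat.eq_zero_of_le_zero ((min_le_right _ _).trans this.le)

theorem ncard_monotoneGEOn_mul_le [Finite Y] (k : ℕ) :
    (monotoneGEOn W t k).ncard * (supportedMonotoneGEOn W t (k + 1)).ncard ≤
      (monotoneGEOn W t (k + 1)).ncard * (supportedMonotoneGEOn W t k).ncard :=
  calc _ ≤ (monotoneGEOn W t k ⊼ supportedMonotoneGEOn W t (k + 1)).ncard *
        (monotoneGEOn W t k ⊻ supportedMonotoneGEOn W t (k + 1)).ncard :=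
      Set.le_ncard_infs_mul_ncard_sups _ _
    _ ≤ (supportedMonotoneGEOn W t k).ncard * (monotoneGEOn W t (k + 1)).ncard :=
      Nat.mul_le_mul (Set.ncard_le_ncard (monotoneGEOn_infs_subset W t k))
        (Set.ncard_le_ncard (monotoneGEOn_sups_subset W t k))
    _ = _ := mul_comm _ _

theorem ncard_monotoneGEOn_zero [Fintype Y] :
    (monotoneGEOn W t 0).ncard = orderPoly Y t :=
  Nat.card_congr (Equiv.subtypeEquivRight fun g => by simp [monotoneGEOn])

variable {W t} in
def supportedMonotoneGEOnEquiv [DecidablePred (· ∈ W)] (hW : IsUpperSet W) {k : ℕ} (hk : k < t) :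
    supportedMonotoneGEOn W t k ≃ {f : W → Fin (t - k) // Monotone f} where
  toFun g := ⟨fun w => ⟨g.1 w - k, by omega⟩,
    fun _ _ h => Fin.mk_le_mk.2 (Nat.sub_le_sub_right (g.2.1.1 h) k)⟩
  invFun f := ⟨fun z => if hz : z ∈ W then ⟨f.1 ⟨z, hz⟩ + k, by omega⟩ else ⟨0, by omega⟩, by
    refine ⟨⟨fun a b hab => ?_, fun z hz => by simp [hz]⟩, fun z hz => by simp [hz]⟩
    by_cases ha : a ∈ W
    · have hb := hW hab ha
      simp only [dif_pos ha, dif_pos hb, Fin.mk_le_mk]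
      exact Nat.add_le_add_right (f.2 (show (⟨a, ha⟩ : W) ≤ ⟨b, hb⟩ from hab)) k
    · simp only [dif_neg ha]
      exact Nat.zero_le _⟩
  left_inv g := by
    ext z
    by_cases hz : z ∈ W
    · have := g.2.1.2 z hz
      simp only [hz, ↓reduceDIte]
      omega
    · simp [hz, g.2.2 z hz]
  right_inv f := by ext w; simp

theorem ncard_supportedMonotoneGEOn [Fintype W] (hW : IsUpperSet W) {k : ℕ} (hk : k < t) :
    (supportedMonotoneGEOn W t k).ncard = orderPoly W (t - k) := by
  classical
  exact Nat.card_congr (supportedMonotoneGEOnEquiv hW hk)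

end Correlation

theorem orderPoly_mul_sum_orderPoly_le {Y : Type*} [Fintype Y] [PartialOrder Y] (W : Set Y)
    [Fintype W] [Nonempty W] (hW : IsUpperSet W) {t : ℕ} (ht : 0 < t) :
    orderPoly Y t * ∑ s ∈ range (t + 1), orderPoly W s ≤
      (∑ k ∈ range t, (monotoneGEOn W t k).ncard) * orderPoly W t := by
  have hB : ∀ k < t, (supportedMonotoneGEOn W t k).ncard = orderPoly W (t - k) :=
    fun k hk => ncard_supportedMonotoneGEOn W t hW hk
  have hsum : ∑ k ∈ range t, (supportedMonotoneGEOn W t k).ncard =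
      ∑ s ∈ range (t + 1), orderPoly W s := by
    rw [sum_range_succ', orderPoly_zero_s13, add_zero, ← sum_range_reflect]
    refine sum_congr rfl fun k hk => ?_
    have hk := mem_range.1 hk
    rw [hB _ (by omega)]
    congr 1
    omega
  have key := Nat.mul_sum_le_sum_mul_of_cross_le
    (fun k hk => (hB k hk).symm ▸ orderPoly_pos W (Nat.sub_pos_of_lt hk))
    (ncard_monotoneGEOn_mul_le W t)
  rwa [hsum, ncard_monotoneGEOn_zero, hB 0 ht, Nat.sub_zero] at key

section RemoveMin

variable {X : Type*} [PartialOrder X] {x : X}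

theorem monotone_iff_of_isMin {β : Type*} [Preorder β] (hx : IsMin x) (g : X → β) :
    Monotone g ↔
      Monotone (fun z : {z // z ≠ x} => g z) ∧ ∀ z : {z // z ≠ x}, x ≤ z → g x ≤ g z := by
  refine ⟨fun hg => ⟨fun _ _ h => hg h, fun _ h => hg h⟩, fun ⟨hQ, hx'⟩ a b hab => ?_⟩
  by_cases ha : a = x
  · subst ha
    by_cases hb : b = a
    · rw [hb]
    · exact hx' ⟨b, hb⟩ hab
  · have hb : b ≠ x := fun hb => ha (le_antisymm (hb ▸ hab) (hx (hb ▸ hab)))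
    exact hQ (show (⟨a, ha⟩ : {z // z ≠ x}) ≤ ⟨b, hb⟩ from hab)

theorem orderPoly_eq_sum_ncard_monotoneGEOn [Fintype X] (hx : IsMin x) (t : ℕ) :
    orderPoly X t = ∑ k ∈ range t, (monotoneGEOn {z : {z : X // z ≠ x} | x ≤ z} t k).ncard := by
  classical
  let p (k : Fin t) (h : {z // z ≠ x} → Fin t) :=
    Monotone h ∧ ∀ z : {z // z ≠ x}, x ≤ z → k ≤ h z
  let e := (Equiv.funSplitAt x (Fin t)).subtypeEquiv (q := fun q => p q.1 q.2)
    (monotone_iff_of_isMin hx)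
  rw [orderPoly, Nat.card_congr (e.trans (Equiv.subtypeProdEquivSigmaSubtype p)), Nat.card_sigma,
    ← Fin.sum_univ_eq_sum_range]
  rfl

theorem card_ge_eq_card_gt_add_one [Finite X] (x : X) :
    Nat.card {y : X // x ≤ y} = Nat.card {z : {z : X // z ≠ x} | x ≤ z} + 1 := by
  have e : {z : {z : X // z ≠ x} | x ≤ z} ≃ ↥(Set.Ici x \ {x}) :=
    (Equiv.subtypeSubtypeEquivSubtypeInter _ (x ≤ ·)).trans
      (Equiv.subtypeEquivRight fun _ => and_comm)
  rw [Nat.card_congr e, Nat.card_coe_set_eq,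
    Set.ncard_sdiff_singleton_add_one Set.self_mem_Ici]
  rfl

end RemoveMin

/-- For a minimal element `x` of a finite poset `P` with `b(x) > 1` and any
integer `t ≥ 1`: `b(x) · Ω(P,t) ≥ (t+1) · Ω(P∖x,t)`. -/
theorem orderPoly_remove_min (X : Type*) [Fintype X] [DecidableEq X]
    [PartialOrder X] (x : X) (hx : IsMin x)
    (hb : 1 < Nat.card {y : X // x ≤ y}) (t : ℕ) (ht : 1 ≤ t) :
    (t + 1) * orderPoly {z : X // z ≠ x} t ≤
      Nat.card {y : X // x ≤ y} * orderPoly X t := by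
  classical
  rw [card_ge_eq_card_gt_add_one] at hb ⊢
  set W : Set {z : X // z ≠ x} := {z | x ≤ z}
  have hW : IsUpperSet W := fun _ _ hab ha => ha.trans hab
  have : Nonempty W := (Nat.card_pos_iff.1 (show 0 < Nat.card W by omega)).1
  refine Nat.le_of_mul_le_mul_right ?_ (orderPoly_pos W ht)
  calc (t + 1) * orderPoly _ t * orderPoly W t
      = orderPoly _ t * ((t + 1) * orderPoly W t) := by ring
    _ ≤ orderPoly _ t * ((Nat.card W + 1) * ∑ s ∈ range (t + 1), orderPoly W s) :=
        Nat.mul_le_mul_left _ (succ_mul_orderPoly_le W t)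
    _ ≤ (Nat.card W + 1) * ((∑ k ∈ range t, (monotoneGEOn W t k).ncard) * orderPoly W t) := by
        rw [mul_left_comm]
        exact Nat.mul_le_mul_left _ (orderPoly_mul_sum_orderPoly_le W hW ht)
    _ = (Nat.card W + 1) * orderPoly X t * orderPoly W t := by
        rw [orderPoly_eq_sum_ncard_monotoneGEOn hx]; ring
end

section
/- Let P = (X, ≺) be a finite poset of width w. Then for all integers t ≥ s ≥ 1, Ω(P,s) · t^w ≤ Ω(P,t) · s^w; equivalently, the function Ω(P,t)/t^w is weakly increasing in the positive integer t. -/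
lemma strictMono_mul_add_div {s t : ℕ} (hs : 0 < s) (hst : s ≤ t) (c : ℕ) :
    StrictMono fun i => (i * t + c) / s := by
  refine strictMono_nat_of_lt_succ fun i => ?_
  calc (i * t + c) / s < (i * t + c + s) / s := by
        rw [Nat.add_div_right _ hs]; exact Nat.lt_succ_self _
    _ ≤ ((i + 1) * t + c) / s := Nat.div_le_div_right (by nlinarith)

namespace OrderPoly

variable {X : Type*} [PartialOrder X] (A : Finset X)

section supBelow

variable (f : A → ℕ)

open Classical in
noncomputable def supBelow (x : X) : ℕ := ({a : A | (a : X) ≤ x} : Finset A).sup f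

lemma monotone_supBelow : Monotone (supBelow A f) := by
  classical
  intro x y hxy
  exact Finset.sup_mono (Finset.monotone_filter_right _ fun _ _ hax => hax.trans hxy)

lemma supBelow_lt {t : ℕ} (ht : 0 < t) (hf : ∀ a, f a < t) (x : X) : supBelow A f x < t := by
  classical
  exact (Finset.sup_lt_iff ht).2 fun a _ => hf a

lemma supBelow_coe (hA : IsAntichain (· ≤ ·) (A : Set X)) (a : A) :
    supBelow A f a = f a := by
  classical
  refine le_antisymm (Finset.sup_le fun b hb => ?_) (Finset.le_sup (by simp))
  rw [Finset.mem_filter] at hb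
  rw [Subtype.ext (hA.eq b.2 a.2 hb.2)]

end supBelow

variable {s t : ℕ}

noncomputable def encode (g : X → Fin s) (f : A → Fin t) (x : X) : ℕ :=
  g x * t + supBelow A (fun a => f a) x

variable {A}

lemma encode_lt (ht : 0 < t) (g : X → Fin s) (f : A → Fin t) (x : X) :
    encode A g f x < t * s := by
  have hsup := supBelow_lt A (fun a => f a) ht (fun a => (f a).is_lt) x
  have hg : (g x : ℕ) + 1 ≤ s := (g x).is_lt
  calc encode A g f x < (g x + 1) * t := by rw [encode]; linarith
    _ ≤ t * s := by rw [mul_comm t]; exact Nat.mul_le_mul_right t hg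

lemma monotone_encode {g : X → Fin s} (hg : Monotone g) (f : A → Fin t) :
    Monotone (encode A g f) := fun _ _ hxy =>
  Nat.add_le_add (Nat.mul_le_mul_right t (hg hxy)) (monotone_supBelow A _ hxy)

lemma encode_coe (hA : IsAntichain (· ≤ ·) (A : Set X)) (g : X → Fin s) (f : A → Fin t)
    (a : A) : encode A g f a = g a * t + f a := by
  rw [encode, supBelow_coe A _ hA]

variable (A)

noncomputable def encodeMap (hs : 0 < s) (ht : 0 < t) :
    {g : X → Fin s // Monotone g} × (A → Fin t) → {g : X → Fin t // Monotone g} × (A → Fin s) :=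
  fun p =>
    (⟨fun x => ⟨encode A p.1.1 p.2 x / s, (Nat.div_lt_iff_lt_mul hs).2 (encode_lt ht _ _ x)⟩,
      fun _ _ hxy => Nat.div_le_div_right (monotone_encode p.1.2 p.2 hxy)⟩,
     fun a => ⟨encode A p.1.1 p.2 a % s, Nat.mod_lt _ hs⟩)

lemma encodeMap_injective (hA : IsAntichain (· ≤ ·) (A : Set X)) (hs : 0 < s) (hst : s ≤ t) :
    Function.Injective (encodeMap A hs (hs.trans_le hst)) := by
  rintro ⟨⟨g, hg⟩, f⟩ ⟨⟨g', hg'⟩, f'⟩ h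
  simp only [encodeMap, Prod.mk.injEq, Subtype.ext_iff, funext_iff, Fin.ext_iff] at h
  obtain ⟨hdiv, hmod⟩ := h
  have hf : f = f' := by
    funext a
    have hcode : g a * t + f a = g' a * t + f' a := by
      rw [← encode_coe hA, ← encode_coe hA, ← Nat.div_add_mod (encode A g f a) s, hdiv, hmod,
        Nat.div_add_mod]
    have := congrArg (· % t) hcode
    simpa [Nat.mul_add_mod', Nat.mod_eq_of_lt, Fin.ext_iff] using this
  subst hf
  have hg : g = g' := funext fun x => Fin.ext ((strictMono_mul_add_div hs hst _).injective (hdiv x))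
  subst hg
  rfl

end OrderPoly

open OrderPoly in
theorem IsAntichain.orderPoly_mul_pow_card_le {X : Type*} [PartialOrder X] [Fintype X]
    {A : Finset X} {s t : ℕ} (hA : IsAntichain (· ≤ ·) (A : Set X))
    (hs : 0 < s) (hst : s ≤ t) :
    orderPoly X s * t ^ A.card ≤ orderPoly X t * s ^ A.card := by
  have := Nat.card_le_card_of_injective _ (encodeMap_injective A hA hs hst)
  simpa only [orderPoly, Nat.card_prod, Nat.card_fun, Nat.card_eq_fintype_card, Fintype.card_coe,
    Fintype.card_fin] using this

/-- If `w` is the width of a finite poset `P` (the maximal size of an antichain),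
then `Ω(P,t)/t^w` is weakly increasing in `t`, i.e. for all `t ≥ s ≥ 1`:
`Ω(P,s) · t^w ≤ Ω(P,t) · s^w`. -/
theorem orderPoly_div_width_monotone (X : Type*) [Fintype X] [PartialOrder X]
    (w : ℕ)
    (hw : IsGreatest {m : ℕ | ∃ A : Finset X,
        (∀ x ∈ A, ∀ y ∈ A, x ≠ y → ¬ x ≤ y ∧ ¬ y ≤ x) ∧ A.card = m} w)
    (s t : ℕ) (hs : 1 ≤ s) (hst : s ≤ t) :
    orderPoly X s * t ^ w ≤ orderPoly X t * s ^ w := by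
  obtain ⟨A, hA, rfl⟩ := hw.1
  have hA' : IsAntichain (· ≤ ·) (A : Set X) := fun x hx y hy hxy => (hA x hx y hy hxy).1
  exact hA'.orderPoly_mul_pow_card_le hs hst
end

section
/- Let P = (X, ≺) be a finite poset, let x ∈ X be a minimal element, and let t ≥ k ≥ 1 be integers. Then Ω(P,k) · Ω(P∖x, t) ≤ Ω(P,t) · Ω(P∖x, k). -/
open Finset
open scoped FinsetFamily

section ExtendAt

variable {X α : Type*} [DecidableEq X] {x : X}

def extendAt (x : X) (c : α) (h : {z : X // z ≠ x} → α) : X → α :=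
  fun y => if hy : y = x then c else h ⟨y, hy⟩

@[simp]
lemma extendAt_self (c : α) (h : {z : X // z ≠ x} → α) : extendAt x c h x = c := dif_pos rfl

lemma extendAt_of_ne {c : α} {h : {z : X // z ≠ x} → α} {y : X} (hy : y ≠ x) :
    extendAt x c h y = h ⟨y, hy⟩ := dif_neg hy

@[simp]
lemma extendAt_coe (c : α) (h : {z : X // z ≠ x} → α) (z : {z : X // z ≠ x}) :
    extendAt x c h z = h z := extendAt_of_ne z.2

lemma Monotone.extendAt [PartialOrder X] [Preorder α] (hx : IsMin x) {c : α} (hc : IsBot c)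
    {h : {z : X // z ≠ x} → α} (hh : Monotone h) : Monotone (extendAt x c h) := by
  intro a b hab
  by_cases ha : a = x
  · simpa [ha] using hc _
  · have hb : b ≠ x := by
      rintro rfl
      exact ha (hx.eq_of_le hab)
    rw [extendAt_of_ne ha, extendAt_of_ne hb]
    exact hh (show (⟨a, ha⟩ : {z // z ≠ x}) ≤ ⟨b, hb⟩ from hab)

end ExtendAt

section MonotoneBelow

variable {X : Type*} [Fintype X] [PartialOrder X]

variable (X) in
open Classical in
noncomputable def monotoneBelow (t k : ℕ) : Finset (X → Fin t) :=
  {g | Monotone g ∧ ∀ y, (g y : ℕ) < k}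

lemma mem_monotoneBelow {t k : ℕ} {g : X → Fin t} :
    g ∈ monotoneBelow X t k ↔ Monotone g ∧ ∀ y, (g y : ℕ) < k := by
  simp [monotoneBelow]

lemma orderPoly_eq_card_monotoneBelow {k t : ℕ} (hkt : k ≤ t) :
    orderPoly X k = #(monotoneBelow X t k) := by
  let e : {g : X → Fin k // Monotone g} ≃ monotoneBelow X t k :=
    { toFun g := ⟨fun y => Fin.castLE hkt (g.1 y), mem_monotoneBelow.2
        ⟨fun a b hab => by simpa only [Fin.le_def, Fin.val_castLE] using g.2 hab,
          fun y => (g.1 y).2⟩⟩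
      invFun g := ⟨fun y => ⟨g.1 y, (mem_monotoneBelow.1 g.2).2 y⟩,
        fun a b hab => by simpa only [Fin.le_def] using (mem_monotoneBelow.1 g.2).1 hab⟩ }
  rw [orderPoly, Nat.card_congr e, Nat.card_eq_finsetCard]

lemma orderPoly_remove_min_eq_card_monotoneBelow [DecidableEq X] {x : X} (hx : IsMin x)
    {k t : ℕ} (hk : 0 < k) (hkt : k ≤ t) :
    orderPoly {z : X // z ≠ x} k = #{g ∈ monotoneBelow X t k | (g x : ℕ) = 0} := by
  let zero : Fin t := ⟨0, hk.trans_le hkt⟩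
  have zero_isBot : IsBot zero := fun _ => Nat.zero_le _
  rw [orderPoly_eq_card_monotoneBelow hkt]
  refine card_nbij' (extendAt x zero) (fun g z => g z) ?_ ?_ ?_ ?_
  · intro h hh
    obtain ⟨h_mono, h_lt⟩ := mem_monotoneBelow.1 hh
    refine mem_filter.2 ⟨mem_monotoneBelow.2 ⟨h_mono.extendAt hx zero_isBot, fun y => ?_⟩,
      by simp [zero]⟩
    by_cases hy : y = x
    · simpa [hy, zero] using hk
    · simpa [extendAt_of_ne hy] using h_lt ⟨y, hy⟩
  · intro g hg
    obtain ⟨g_mono, g_lt⟩ := mem_monotoneBelow.1 (mem_filter.1 hg).1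
    exact mem_monotoneBelow.2 ⟨fun a b hab => g_mono hab, fun z => g_lt z⟩
  · intro h _
    ext z
    simp
  · intro g hg
    ext y
    by_cases hy : y = x
    · simpa [hy, zero] using (mem_filter.1 hg).2.symm
    · simp [extendAt_of_ne hy]

lemma monotoneBelow_mono {t k m : ℕ} (hkm : k ≤ m) :
    monotoneBelow X t k ⊆ monotoneBelow X t m := fun _ hg =>
  let ⟨g_mono, g_lt⟩ := mem_monotoneBelow.1 hg
  mem_monotoneBelow.2 ⟨g_mono, fun y => (g_lt y).trans_le hkm⟩

lemma infs_monotoneBelow_subset {t k m : ℕ} (x : X) :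
    monotoneBelow X t k ⊼ {g ∈ monotoneBelow X t m | (g x : ℕ) = 0} ⊆
      {g ∈ monotoneBelow X t k | (g x : ℕ) = 0} := by
  refine infs_subset_iff.2 fun g hg h hh => ?_
  obtain ⟨g_mono, g_lt⟩ := mem_monotoneBelow.1 hg
  obtain ⟨h_mem, h_x⟩ := mem_filter.1 hh
  have h_mono := (mem_monotoneBelow.1 h_mem).1
  refine mem_filter.2 ⟨mem_monotoneBelow.2 ⟨g_mono.inf h_mono, fun y => ?_⟩, ?_⟩
  · exact (Fin.le_def.1 (inf_le_left : g y ⊓ h y ≤ g y)).trans_lt (g_lt y)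
  · exact Nat.eq_zero_of_le_zero ((Fin.le_def.1 (inf_le_right : g x ⊓ h x ≤ h x)).trans_eq h_x)

lemma sups_monotoneBelow_subset {t k : ℕ} :
    monotoneBelow X t k ⊻ monotoneBelow X t k ⊆ monotoneBelow X t k := by
  refine sups_subset_iff.2 fun g hg h hh => ?_
  obtain ⟨g_mono, g_lt⟩ := mem_monotoneBelow.1 hg
  obtain ⟨h_mono, h_lt⟩ := mem_monotoneBelow.1 hh
  exact mem_monotoneBelow.2 ⟨g_mono.sup h_mono, fun y => max_lt (g_lt y) (h_lt y)⟩

end MonotoneBelow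

/-- For a minimal element `x` of a finite poset `P` and integers `t ≥ k ≥ 1`:
`Ω(P,k) · Ω(P∖x,t) ≤ Ω(P,t) · Ω(P∖x,k)`. -/
theorem orderPoly_ratio_remove_min (X : Type*) [Fintype X] [DecidableEq X]
    [PartialOrder X] (x : X) (hx : IsMin x)
    (k t : ℕ) (hk : 1 ≤ k) (hkt : k ≤ t) :
    orderPoly X k * orderPoly {z : X // z ≠ x} t ≤
      orderPoly X t * orderPoly {z : X // z ≠ x} k := by
  rw [orderPoly_remove_min_eq_card_monotoneBelow hx hk hkt,
    orderPoly_remove_min_eq_card_monotoneBelow hx (hk.trans hkt) le_rfl,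
    orderPoly_eq_card_monotoneBelow (X := X) hkt, orderPoly_eq_card_monotoneBelow (X := X) le_rfl,
    mul_comm #(monotoneBelow X t t)]
  calc _ ≤ #(_ ⊼ _) * #(_ ⊻ _) := le_card_infs_mul_card_sups _ _
    _ ≤ _ := by
      gcongr
      · exact infs_monotoneBelow_subset x
      · exact (sups_subset (monotoneBelow_mono hkt) (filter_subset _ _)).trans
          sups_monotoneBelow_subset
end

section
/- Let P = (X, ≺) be a finite poset, let x ∈ X, and let a ≥ 1 be an integer. Then there exists an integer T such that for all integers t > T, Ω(P,t; x,a)^2 ≥ Ω(P,t; x,a+1) · Ω(P,t; x,a−1). (This is an asymptotic version of Graham's conjecture.) -/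
/-- `Ω(P,t; x,a)`: the number of order-preserving maps `g : X → {1,…,t}` with
`g x = a`. (For `a = 0` or `a > t` this number is `0`.) -/
noncomputable def orderPolyAt (X : Type*) [Fintype X] [PartialOrder X]
    (t : ℕ) (x : X) (a : ℕ) : ℕ :=
  Nat.card {g : X → Fin t // Monotone g ∧ (g x : ℕ) + 1 = a}

/-!
The inequality holds for every `t`. The maps `X → {0,…,t}` form a finite distributive lattice
under pointwise `min` and `max`, in which the monotone maps form a sublattice. Shifting values
by `0` or by `1`, `Ω(P,t; x,a)` counts both the monotone maps avoiding the value `t` with value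
`a - 1` at `x`, and the monotone maps avoiding the value `0` with value `a` at `x`. The meet of a
map of the first kind for `a + 1` with one of the second kind for `a - 1` is of the first kind
for `a`, and their join is of the second kind for `a`; so Daykin's inequality
`|A| |B| ≤ |A ⊼ B| |A ⊻ B|` gives `Ω(a + 1) Ω(a - 1) ≤ Ω(a)²`.
-/

open Finset
open scoped FinsetFamily

theorem natCard_mul_le_of_inf_mem_of_sup_mem {L : Type*} [DistribLattice L] [Finite L]
    {P Q R S : L → Prop} (hinf : ∀ a b, P a → Q b → R (a ⊓ b))
    (hsup : ∀ a b, P a → Q b → S (a ⊔ b)) :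
    Nat.card {a // P a} * Nat.card {b // Q b} ≤ Nat.card {c // R c} * Nat.card {c // S c} := by
  classical
  have := Fintype.ofFinite L
  simp only [Nat.card_eq_fintype_card, Fintype.card_subtype]
  calc #(univ.filter P) * #(univ.filter Q)
      ≤ #(univ.filter P ⊼ univ.filter Q) * #(univ.filter P ⊻ univ.filter Q) :=
        le_card_infs_mul_card_sups _ _
    _ ≤ #(univ.filter R) * #(univ.filter S) := by
      gcongr
      · exact infs_subset_iff.2 fun a ha b hb => by simp_all
      · exact sups_subset_iff.2 fun a ha b hb => by simp_all

theorem natCard_monotone_comp_orderEmbedding {X α β : Type*} [Preorder X] [Preorder α]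
    [Preorder β] (e : α ↪o β) (x : X) (p : β → Prop) :
    Nat.card {g : X → α // Monotone g ∧ p (e (g x))} =
      Nat.card {h : X → β // Monotone h ∧ p (h x) ∧ ∀ y, h y ∈ Set.range e} := by
  refine Nat.card_congr (Equiv.ofBijective
    (fun g => ⟨e ∘ g.1, e.monotone.comp g.2.1, g.2.2, fun y => ⟨g.1 y, rfl⟩⟩) ⟨?_, ?_⟩)
  · intro g g' hgg'
    exact Subtype.ext (funext fun y => e.injective (congrFun (congrArg Subtype.val hgg') y))
  · rintro ⟨h, hmono, hx, hrange⟩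
    let g y := (hrange y).choose
    have hg y : e (g y) = h y := (hrange y).choose_spec
    refine ⟨⟨g, fun y z hyz => e.le_iff_le.1 ?_, ?_⟩, Subtype.ext (funext hg)⟩
    · simpa only [hg] using hmono hyz
    · simpa only [hg] using hx

section

variable {X : Type*} [Fintype X] [PartialOrder X]

theorem orderPolyAt_eq_natCard_castSucc (t : ℕ) (x : X) (a : ℕ) :
    orderPolyAt X t x a =
      Nat.card {h : X → Fin (t + 1) // Monotone h ∧ (h x : ℕ) + 1 = a ∧ ∀ y, (h y : ℕ) < t} := by
  simpa [orderPolyAt, Fin.exists_castSucc_eq, Fin.lt_last_iff_ne_last.symm, Fin.lt_def] using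
    natCard_monotone_comp_orderEmbedding (Fin.castSuccOrderEmb (n := t)) x
      (fun i => (i : ℕ) + 1 = a)

theorem orderPolyAt_eq_natCard_succ (t : ℕ) (x : X) (a : ℕ) :
    orderPolyAt X t x a =
      Nat.card {h : X → Fin (t + 1) // Monotone h ∧ (h x : ℕ) = a ∧ ∀ y, 0 < (h y : ℕ)} := by
  simpa [orderPolyAt, Fin.pos_iff_ne_zero'] using
    natCard_monotone_comp_orderEmbedding (Fin.succOrderEmb t) x (fun i => (i : ℕ) = a)

theorem orderPolyAt_succ_mul_orderPolyAt_pred_le_sq (t : ℕ) (x : X) {a : ℕ} (ha : 1 ≤ a) :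
    orderPolyAt X t x (a + 1) * orderPolyAt X t x (a - 1) ≤ orderPolyAt X t x a ^ 2 := by
  rw [orderPolyAt_eq_natCard_castSucc t x (a + 1), orderPolyAt_eq_natCard_succ t x (a - 1), sq]
  nth_rw 1 [orderPolyAt_eq_natCard_castSucc]
  rw [orderPolyAt_eq_natCard_succ]
  refine natCard_mul_le_of_inf_mem_of_sup_mem ?_ ?_
  · rintro u v ⟨hu, hux, hut⟩ ⟨hv, hvx, -⟩
    refine ⟨hu.inf hv, ?_, fun y => ?_⟩
    · simp only [Pi.inf_apply, Fin.coe_min]; omega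
    · simp only [Pi.inf_apply, Fin.coe_min]; have := hut y; omega
  · rintro u v ⟨hu, hux, -⟩ ⟨hv, hvx, hv0⟩
    refine ⟨hu.sup hv, ?_, fun y => ?_⟩
    · simp only [Pi.sup_apply, Fin.coe_max]; omega
    · simp only [Pi.sup_apply, Fin.coe_max]; have := hv0 y; omega

end

/-- **Asymptotic Graham conjecture**: for a finite poset `P`, `x ∈ X` and `a ≥ 1`
there is a `T` such that for all `t > T`:
`Ω(P,t; x,a)^2 ≥ Ω(P,t; x,a+1) · Ω(P,t; x,a−1)`. -/
theorem graham_asymptotic (X : Type*) [Fintype X] [PartialOrder X]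
    (x : X) (a : ℕ) (ha : 1 ≤ a) :
    ∃ T : ℕ, ∀ t : ℕ, T < t →
      orderPolyAt X t x (a + 1) * orderPolyAt X t x (a - 1) ≤
        orderPolyAt X t x a ^ 2 :=
  ⟨0, fun t _ => orderPolyAt_succ_mul_orderPolyAt_pred_le_sq t x ha⟩
end

section
/- Let P = (X, ≺) be a finite poset, let x ∈ X, and let a, t be integers with t > a > 1. Then Ω(P,t; x,a+1) · Ω(P,t; x,a) ≥ Ω(P,t+1; x,a+1) · Ω(P,t−1; x,a). -/
open Finset FinsetFamily

open Classical in
noncomputable def monotoneMapsIcc {X : Type*} [Fintype X] [Preorder X] (x : X) (lo hi c : ℕ) :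
    Finset (X → ℕ) :=
  (Fintype.piFinset fun _ => Icc lo hi).filter fun f => Monotone f ∧ f x = c

section Preorder

variable {X : Type*} [Fintype X] [Preorder X] {x : X} {lo hi c : ℕ} {f : X → ℕ}

theorem mem_monotoneMapsIcc :
    f ∈ monotoneMapsIcc x lo hi c ↔ Monotone f ∧ f x = c ∧ ∀ u, lo ≤ f u ∧ f u ≤ hi := by
  simp only [monotoneMapsIcc, mem_filter, Fintype.mem_piFinset, mem_Icc]
  tauto

variable {lo₁ hi₁ lo₂ hi₂ : ℕ}

theorem infs_monotoneMapsIcc_subset :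
    monotoneMapsIcc x lo₁ hi₁ c ⊼ monotoneMapsIcc x lo₂ hi₂ c ⊆
      monotoneMapsIcc x (lo₁ ⊓ lo₂) (hi₁ ⊓ hi₂) c := by
  simp only [subset_iff, mem_infs, mem_monotoneMapsIcc]
  rintro _ ⟨f, ⟨hf, hfx, hfb⟩, g, ⟨hg, hgx, hgb⟩, rfl⟩
  refine ⟨hf.inf hg, by simp [hfx, hgx], fun u => ?_⟩
  have := hfb u
  have := hgb u
  simp only [Pi.inf_apply, le_inf_iff, inf_le_iff]
  omega

theorem sups_monotoneMapsIcc_subset :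
    monotoneMapsIcc x lo₁ hi₁ c ⊻ monotoneMapsIcc x lo₂ hi₂ c ⊆
      monotoneMapsIcc x (lo₁ ⊔ lo₂) (hi₁ ⊔ hi₂) c := by
  simp only [subset_iff, mem_sups, mem_monotoneMapsIcc]
  rintro _ ⟨f, ⟨hf, hfx, hfb⟩, g, ⟨hg, hgx, hgb⟩, rfl⟩
  refine ⟨hf.sup hg, by simp [hfx, hgx], fun u => ?_⟩
  have := hfb u
  have := hgb u
  simp only [Pi.sup_apply, sup_le_iff, le_sup_iff]
  omega

variable (lo₁ hi₁ lo₂ hi₂) in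
theorem card_mul_card_monotoneMapsIcc_le :
    #(monotoneMapsIcc x lo₁ hi₁ c) * #(monotoneMapsIcc x lo₂ hi₂ c) ≤
      #(monotoneMapsIcc x (lo₁ ⊓ lo₂) (hi₁ ⊓ hi₂) c) *
        #(monotoneMapsIcc x (lo₁ ⊔ lo₂) (hi₁ ⊔ hi₂) c) :=
  (le_card_infs_mul_card_sups _ _).trans <|
    Nat.mul_le_mul (card_le_card infs_monotoneMapsIcc_subset)
      (card_le_card sups_monotoneMapsIcc_subset)

theorem card_monotoneMapsIcc_succ :
    #(monotoneMapsIcc x (lo + 1) (hi + 1) (c + 1)) = #(monotoneMapsIcc x lo hi c) := by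
  refine card_nbij' (· - 1) (· + 1) ?_ ?_ ?_ ?_ <;> intro f hf <;>
    simp only [mem_coe, mem_monotoneMapsIcc] at hf ⊢ <;> obtain ⟨hf, hfx, hfb⟩ := hf
  · refine ⟨fun u v huv => Nat.sub_le_sub_right (hf huv) 1, by simp [hfx], fun u => ?_⟩
    have := hfb u
    simp only [Pi.sub_apply, Pi.one_apply]
    omega
  · refine ⟨fun u v huv => Nat.add_le_add_right (hf huv) 1, by simp [hfx], fun u => ?_⟩
    have := hfb u
    simp only [Pi.add_apply, Pi.one_apply]
    omega
  · ext u
    have := hfb u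
    simp only [Pi.add_apply, Pi.sub_apply, Pi.one_apply]
    omega
  · ext u
    simp

end Preorder

section PartialOrder

variable {X : Type*} [Fintype X] [PartialOrder X]

theorem orderPolyAt_eq_card_monotoneMapsIcc (t : ℕ) (x : X) (a : ℕ) :
    orderPolyAt X t x a = #(monotoneMapsIcc x 1 t a) := by
  rw [orderPolyAt, ← Nat.card_eq_finsetCard]
  refine Nat.card_congr
    { toFun g := ⟨fun u => g.1 u + 1, ?_⟩
      invFun f := ⟨fun u => ⟨f.1 u - 1, ?_⟩, ?_⟩
      left_inv g := ?_
      right_inv f := ?_ }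
  · obtain ⟨g, hg, hgx⟩ := g
    exact mem_monotoneMapsIcc.2 ⟨fun u v huv => Nat.add_le_add_right (hg huv) 1, hgx,
      fun u => ⟨by omega, (g u).isLt⟩⟩
  · have := (mem_monotoneMapsIcc.1 f.2).2.2 u
    omega
  · obtain ⟨hf, -, hfb⟩ := mem_monotoneMapsIcc.1 f.2
    refine ⟨fun u v huv => Fin.le_def.2 (Nat.sub_le_sub_right (hf huv) 1), ?_⟩
    have := hfb x
    simp only
    omega
  · ext u
    simp
  · obtain ⟨-, -, hfb⟩ := mem_monotoneMapsIcc.1 f.2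
    ext u
    have := hfb u
    simp only
    omega

theorem orderPolyAt_zero (x : X) (a : ℕ) : orderPolyAt X 0 x a = 0 := by
  have : IsEmpty (X → Fin 0) := ⟨fun g => (g x).elim0⟩
  simp [orderPolyAt]

end PartialOrder

theorem graham_variation_general (X : Type*) [Fintype X] [PartialOrder X]
    (x : X) (a t : ℕ) :
    orderPolyAt X (t + 1) x (a + 1) * orderPolyAt X (t - 1) x a ≤
      orderPolyAt X t x (a + 1) * orderPolyAt X t x a := by
  rcases t with _ | t
  · simp [orderPolyAt_zero]
  simp only [orderPolyAt_eq_card_monotoneMapsIcc, Nat.add_sub_cancel]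
  calc #(monotoneMapsIcc x 1 (t + 2) (a + 1)) * #(monotoneMapsIcc x 1 t a)
      = #(monotoneMapsIcc x 0 (t + 1) a) * #(monotoneMapsIcc x 1 t a) := by
        rw [← card_monotoneMapsIcc_succ (lo := 0)]
    _ ≤ #(monotoneMapsIcc x 0 t a) * #(monotoneMapsIcc x 1 (t + 1) a) := by
        simpa using card_mul_card_monotoneMapsIcc_le 0 (t + 1) 1 t
    _ = #(monotoneMapsIcc x 1 (t + 1) (a + 1)) * #(monotoneMapsIcc x 1 (t + 1) a) := by
        rw [← card_monotoneMapsIcc_succ (lo := 0)]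

/-- For a finite poset `P`, `x ∈ X` and integers `t > a > 1`:
`Ω(P,t; x,a+1) · Ω(P,t; x,a) ≥ Ω(P,t+1; x,a+1) · Ω(P,t−1; x,a)`. -/
theorem graham_variation (X : Type*) [Fintype X] [PartialOrder X]
    (x : X) (a t : ℕ) (ha : 1 < a) (hat : a < t) :
    orderPolyAt X (t + 1) x (a + 1) * orderPolyAt X (t - 1) x a ≤
      orderPolyAt X t x (a + 1) * orderPolyAt X t x a :=
  graham_variation_general X x a t
end
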